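/- arXiv:2007.05358 — 9 statements merged into one kernel-verified Lean document; each statement's English description precedes it below -/
import Mathlib

section
/- Let X_1,...,X_n be nonnegative random variables with common absolutely continuous distribution function F, and let N(n,s) be the maximum number of the X_i whose sum does not exceed s. If t = t(n,s) solves n·∫_0^t x dF(x) = s, then E[N(n,s)] ≤ n·F(t). -/
open MeasureTheory ProbabilityTheory Finset Set
open scoped Classical

/-!
Since `t ≤ x + (t - x)⁺` for every real `x`, any set `A` of indices with `∑_{i ∈ A} X i ≤ s`
satisfies `#A · t ≤ s + ∑_i (t - X i)⁺`, hence `N · t ≤ s + ∑_i (t - X i)⁺` pointwise.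
Taking expectations, with `E (t - X i)⁺ = t F(t) - ∫_{(0,t]} x dF(x)` for nonnegative `X i`
and `n ∫_{(0,t]} x dF(x) = s`, gives `E[N] · t ≤ n F(t) · t`.
-/

lemma card_mul_le_sum_add_sum_max_sub_zero {ι : Type*} [Fintype ι] (A : Finset ι)
    (x : ι → ℝ) (t : ℝ) :
    #A * t ≤ ∑ i ∈ A, x i + ∑ i, max (t - x i) 0 :=
  calc (#A : ℝ) * t = ∑ i ∈ A, t := by rw [sum_const, nsmul_eq_mul]
    _ ≤ ∑ i ∈ A, (x i + max (t - x i) 0) :=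
        sum_le_sum fun i _ => by linarith [le_max_left (t - x i) 0]
    _ = ∑ i ∈ A, x i + ∑ i ∈ A, max (t - x i) 0 := sum_add_distrib
    _ ≤ ∑ i ∈ A, x i + ∑ i, max (t - x i) 0 := by
        gcongr
        exact subset_univ A

lemma sup_card_mul_le_add_sum_max_sub_zero {ι : Type*} [Fintype ι] (x : ι → ℝ) {s : ℝ} (hs : 0 ≤ s)
    (t : ℝ) :
    (((univ.powerset.filter (fun A : Finset ι => ∑ i ∈ A, x i ≤ s)).sup card : ℕ) : ℝ) * t ≤
      s + ∑ i, max (t - x i) 0 := by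
  obtain ⟨A, hA, hsup⟩ := exists_mem_eq_sup
    (univ.powerset.filter (fun A : Finset ι => ∑ i ∈ A, x i ≤ s)) ⟨∅, by simp [hs]⟩ card
  rw [hsup]
  have hAs : ∑ i ∈ A, x i ≤ s := (mem_filter.mp hA).2
  linarith [card_mul_le_sum_add_sum_max_sub_zero A x t]

lemma integral_max_sub_zero_eq {μ : Measure ℝ} [IsFiniteMeasure μ] (h0 : ∀ᵐ x ∂μ, 0 ≤ x)
    (t : ℝ) :
    ∫ x, max (t - x) 0 ∂μ = t * μ.real (Iic t) - ∫ x in Ioc 0 t, x ∂μ := by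
  have hsplit : (fun x => max (t - x) 0) =ᵐ[μ]
      fun x => (Iic t).indicator (fun _ => t) x - (Ioc 0 t).indicator id x := by
    filter_upwards [h0] with x hx
    rcases hx.eq_or_lt with rfl | hpos
    · rcases le_or_gt 0 t with ht | ht
      · simp [ht]
      · simp [ht, ht.le]
    · by_cases hxt : x ≤ t
      · simp [hxt, hpos]
      · simp [hxt, (not_le.mp hxt).le]
  have hid : IntegrableOn id (Ioc 0 t) μ :=
    (continuous_id.integrableOn_Icc (a := 0) (b := t)).mono_set Ioc_subset_Icc_self
  rw [integral_congr_ae hsplit,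
    integral_sub ((integrable_const t).indicator measurableSet_Iic)
      (hid.integrable_indicator measurableSet_Ioc),
    integral_indicator_const t measurableSet_Iic, integral_indicator measurableSet_Ioc,
    smul_eq_mul, mul_comm]
  rfl

section RandomVariable

variable {Ω : Type*} [MeasurableSpace Ω] (P : Measure Ω) [IsFiniteMeasure P] {Y : Ω → ℝ}

lemma integrable_max_sub_zero (hY : Measurable Y) (hY0 : ∀ ω, 0 ≤ Y ω) (t : ℝ) :
    Integrable (fun ω => max (t - Y ω) 0) P := by
  refine (integrable_const |t|).mono' (by fun_prop) (ae_of_all _ fun ω => ?_)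
  rw [Real.norm_eq_abs, abs_of_nonneg (le_max_right _ _)]
  exact max_le (by linarith [le_abs_self t, hY0 ω]) (abs_nonneg t)

lemma integral_max_sub_zero_eq_of_nonneg (hY : Measurable Y) (hY0 : ∀ ω, 0 ≤ Y ω) (t : ℝ) :
    ∫ ω, max (t - Y ω) 0 ∂P = t * (P.map Y).real (Iic t) - ∫ x in Ioc 0 t, x ∂(P.map Y) := by
  have h0 : ∀ᵐ x ∂(P.map Y), 0 ≤ x :=
    (ae_map_iff hY.aemeasurable measurableSet_Ici).2 (ae_of_all _ hY0)
  rw [← integral_max_sub_zero_eq h0, integral_map hY.aemeasurable (by fun_prop)]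

end RandomVariable

/-- BRS-inequality (Bruss–Robertson 1991, Theorem 1(i)): for identically
distributed nonnegative random variables `X 0, …, X (n-1)` with common law `μ`
and common distribution function `F`, if `t` solves the BRS-equation
`n · ∫_0^t x dF(x) = s`, then `E[N(n,s)] ≤ n · F(t)`, where `N(n,s)` is the
maximum number of the `X i` whose sum does not exceed `s`. -/
theorem brs_inequality_iid
    {Ω : Type*} [MeasureSpace Ω] [IsProbabilityMeasure (ℙ : Measure Ω)]
    (n : ℕ) (s t : ℝ) (hs : 0 < s) (ht : 0 < t)
    (X : Fin n → Ω → ℝ) (hXmeas : ∀ k, Measurable (X k))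
    (hXnonneg : ∀ k ω, 0 ≤ X k ω)
    (μ : Measure ℝ) (hlaw : ∀ k, Measure.map (X k) ℙ = μ)
    (F : ℝ → ℝ) (hF : ∀ x, F x = (μ (Iic x)).toReal)
    (hBRS : (n : ℝ) * ∫ x in Ioc (0:ℝ) t, x ∂μ = s)
    (N : Ω → ℕ)
    (hN : ∀ ω, N ω = ((Finset.univ.powerset.filter
      (fun A : Finset (Fin n) => ∑ i ∈ A, X i ω ≤ s)).sup Finset.card)) :
    ∫ ω, (N ω : ℝ) ≤ n * F t := by
  have hint : ∀ i, Integrable (fun ω => max (t - X i ω) 0) :=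
    fun i => integrable_max_sub_zero _ (hXmeas i) (hXnonneg i) t
  have hmean : ∀ i, ∫ ω, max (t - X i ω) 0 = t * F t - ∫ x in Ioc 0 t, x ∂μ := fun i => by
    rw [hF, ← hlaw i]
    exact integral_max_sub_zero_eq_of_nonneg _ (hXmeas i) (hXnonneg i) t
  have hbound : (∫ ω, (N ω : ℝ)) * t ≤ s + n * (t * F t - ∫ x in Ioc 0 t, x ∂μ) :=
    calc (∫ ω, (N ω : ℝ)) * t = ∫ ω, (N ω : ℝ) * t := (integral_mul_const _ _).symm
      _ ≤ ∫ ω, (s + ∑ i, max (t - X i ω) 0) :=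
          integral_mono_of_nonneg (ae_of_all _ fun ω => by positivity)
            ((integrable_const s).add (integrable_finsetSum _ fun i _ => hint i))
            (ae_of_all _ fun ω => by
              simp only [hN ω]
              exact sup_card_mul_le_add_sum_max_sub_zero (X · ω) hs.le t)
      _ = s + n * (t * F t - ∫ x in Ioc 0 t, x ∂μ) := by
          rw [integral_add (integrable_const s) (integrable_finsetSum _ fun i _ => hint i),
            integral_finsetSum _ fun i _ => hint i]
          simp [hmean, mul_sub]
  exact le_of_mul_le_mul_right (by linarith) ht
end

section
/- Let X_1,...,X_n be positive random variables, jointly continuously distributed, where X_k has absolutely continuous marginal distribution function F_k. If t = t(n,s) is the unique solution of Σ_{k=1}^n ∫_0^t x dF_k(x) = s, then E[N(n,s)] ≤ Σ_{k=1}^n F_k(t). -/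
/-!
For every set `A` of indices whose values sum to at most `s`,
`t * #A = ∑_{i ∈ A} (t - X i) + ∑_{i ∈ A} X i ≤ ∑_i (t - X i)⁺ + s`, so pointwise
`t * N ≤ ∑_k (t - X k)⁺ + s`. For positive `X k`,
`E[(t - X k)⁺] = t * F k t - ∫_0^t x dF_k(x)`, and the defining equation of `t` makes the
subtracted terms cancel `s` after taking expectations.
-/

open MeasureTheory ProbabilityTheory Finset Set
open scoped Classical

lemma mul_card_le_sum_max_sub_add {ι : Type*} [Fintype ι] (x : ι → ℝ) (t : ℝ) {s : ℝ}
    {A : Finset ι} (hA : ∑ i ∈ A, x i ≤ s) :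
    t * #A ≤ ∑ i, max (t - x i) 0 + s :=
  calc t * #A = ∑ i ∈ A, (t - x i) + ∑ i ∈ A, x i := by
        rw [sum_sub_distrib, sum_const, nsmul_eq_mul, mul_comm]; ring
    _ ≤ ∑ i ∈ A, max (t - x i) 0 + s := by
        gcongr with i
        exact le_max_left _ _
    _ ≤ ∑ i, max (t - x i) 0 + s := by
        gcongr
        exact subset_univ A

lemma mul_sup_card_le_sum_max_sub_add {ι : Type*} [Fintype ι] (x : ι → ℝ) (t : ℝ) {s : ℝ}
    (hs : 0 ≤ s) :
    t * (((univ.powerset.filter fun A : Finset ι => ∑ i ∈ A, x i ≤ s).sup card : ℕ) : ℝ)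
      ≤ ∑ i, max (t - x i) 0 + s := by
  obtain ⟨A, hA, hsup⟩ := exists_mem_eq_sup
    (univ.powerset.filter fun A : Finset ι => ∑ i ∈ A, x i ≤ s) ⟨∅, by simpa using hs⟩
    card
  rw [hsup]
  exact mul_card_le_sum_max_sub_add x t (mem_filter.mp hA).2

lemma max_sub_eq_indicator_sub_indicator {t x : ℝ} (hx : 0 < x) :
    max (t - x) 0 = (Iic t).indicator (fun _ => t) x - (Ioc 0 t).indicator id x := by
  by_cases hxt : x ≤ t
  · simp [hxt, hx, indicator_of_mem]
  · simp [hxt, le_of_lt (not_le.mp hxt)]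

section PositiveMeasure

variable {ν : Measure ℝ} [IsFiniteMeasure ν]

lemma integrable_indicator_sub_indicator (t : ℝ) :
    Integrable (fun x => (Iic t).indicator (fun _ => t) x - (Ioc 0 t).indicator id x) ν :=
  ((integrable_const t).indicator measurableSet_Iic).sub
    ((continuous_id.integrableOn_Ioc).integrable_indicator measurableSet_Ioc)

lemma integrable_max_sub_zero_s1 (hν : ∀ᵐ x ∂ν, 0 < x) (t : ℝ) :
    Integrable (fun x => max (t - x) 0) ν :=
  (integrable_indicator_sub_indicator t).congr
    (hν.mono fun _ hx => (max_sub_eq_indicator_sub_indicator hx).symm)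

lemma integral_max_sub_zero (hν : ∀ᵐ x ∂ν, 0 < x) (t : ℝ) :
    ∫ x, max (t - x) 0 ∂ν = t * (ν (Iic t)).toReal - ∫ x in Ioc 0 t, x ∂ν := by
  rw [integral_congr_ae (hν.mono fun _ hx => max_sub_eq_indicator_sub_indicator hx),
    integral_sub ((integrable_const t).indicator measurableSet_Iic)
      ((continuous_id.integrableOn_Ioc).integrable_indicator measurableSet_Ioc),
    integral_indicator_const _ measurableSet_Iic, integral_indicator measurableSet_Ioc,
    smul_eq_mul, mul_comm, measureReal_def]
  rfl

end PositiveMeasure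

/-- Generalized BRS-inequality (Steele 2016, Theorem 2): for positive,
possibly dependent random variables `X k` with absolutely continuous marginal
distribution functions `F k`, if `t` solves `∑ k, ∫_0^t x dF_k(x) = s`, then
`E[N(n,s)] ≤ ∑ k, F k t`. -/
theorem brs_inequality_general
    {Ω : Type*} [MeasureSpace Ω] [IsProbabilityMeasure (ℙ : Measure Ω)]
    (n : ℕ) (s t : ℝ) (hs : 0 < s) (ht : 0 < t)
    (X : Fin n → Ω → ℝ) (hXmeas : ∀ k, Measurable (X k))
    (hXpos : ∀ k ω, 0 < X k ω)
    (F : Fin n → ℝ → ℝ)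
    (hF : ∀ k x, F k x = ((Measure.map (X k) ℙ) (Iic x)).toReal)
    (hBRS : ∑ k : Fin n, ∫ x in Ioc (0:ℝ) t, x ∂(Measure.map (X k) ℙ) = s)
    (N : Ω → ℕ)
    (hN : ∀ ω, N ω = ((Finset.univ.powerset.filter
      (fun A : Finset (Fin n) => ∑ i ∈ A, X i ω ≤ s)).sup Finset.card)) :
    ∫ ω, (N ω : ℝ) ≤ ∑ k : Fin n, F k t := by
  have hpos : ∀ k, ∀ᵐ x ∂(Measure.map (X k) ℙ), 0 < x := fun k =>
    (ae_map_iff (hXmeas k).aemeasurable measurableSet_Ioi).2 (ae_of_all _ (hXpos k))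
  have hint : ∀ k, Integrable (fun ω => max (t - X k ω) 0) :=
    fun k => (integrable_max_sub_zero_s1 (hpos k) t).comp_measurable (hXmeas k)
  have hexp : ∀ k, ∫ ω, max (t - X k ω) 0
      = t * F k t - ∫ x in Ioc 0 t, x ∂(Measure.map (X k) ℙ) := by
    intro k
    rw [hF, ← integral_max_sub_zero (hpos k),
      integral_map (hXmeas k).aemeasurable (by fun_prop : Continuous _).aestronglyMeasurable]
  have hpt : ∀ ω, t * (N ω : ℝ) ≤ ∑ k, max (t - X k ω) 0 + s := fun ω => by
    rw [hN ω]
    exact mul_sup_card_le_sum_max_sub_add (X · ω) t hs.le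
  refine le_of_mul_le_mul_left ?_ ht
  calc t * ∫ ω, (N ω : ℝ) = ∫ ω, t * (N ω : ℝ) := (integral_const_mul _ _).symm
    _ ≤ ∫ ω, (∑ k, max (t - X k ω) 0 + s) :=
        integral_mono_of_nonneg (ae_of_all _ fun ω => by positivity)
          ((integrable_finsetSum _ fun k _ => hint k).add (integrable_const s)) (ae_of_all _ hpt)
    _ = ∑ k, (t * F k t - ∫ x in Ioc 0 t, x ∂(Measure.map (X k) ℙ)) + s := by
        rw [integral_add (integrable_finsetSum _ fun k _ => hint k) (integrable_const s),
          integral_finsetSum _ fun k _ => hint k, integral_const]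
        simp [hexp]
    _ = t * ∑ k, F k t := by rw [sum_sub_distrib, hBRS, mul_sum]; ring
end

section
/- With p_n = P(N(n,s) < n), one has E[N(n,s)] ≤ p_n·(Σ_{k=1}^n F_k(t) − (s − E[S_{A(n,s)}])/t) + n·(1 − p_n), where t = t(n,s). -/
/-!
For positive `x₁, …, xₙ` and any index set `B`, each `i ∈ B` contributes
`(t - xᵢ)/t + xᵢ/t = 1`, and `t - xᵢ ≤ (t - xᵢ)⁺`, so pointwise
`#B ≤ ∑ₖ (t - xₖ)⁺/t + (∑_{i∈B} xᵢ)/t`. Taking `B = A(n,s)` and expectations gives the refined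
BRS-inequality `E[N] ≤ R := ∑ₖ Fₖ(t) - (s - E[S_A])/t`. As `Fₖ(t) ≤ 1` and `E[S_A] ≤ s`, `R ≤ n`,
hence `E[N] ≤ R = p R + (1 - p) R ≤ p R + (1 - p) n`.

`E[S_A]` is meaningful because `A` is measurable: it is the unique lexicographic initial segment
of `(Xₖ, k)` of cardinality `N`, and `N` is measurable.
-/

open MeasureTheory ProbabilityTheory Finset Set
open scoped Classical

theorem indicator_Iic_sub_indicator_Ioc_div_eq_max {x t : ℝ} (hx : 0 < x) (ht : 0 < t) :
    (Iic t).indicator 1 x - (Ioc 0 t).indicator id x / t = max (t - x) 0 / t := by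
  by_cases hxt : x ≤ t
  · rw [indicator_of_mem (Set.mem_Iic.2 hxt), indicator_of_mem (Set.mem_Ioc.2 ⟨hx, hxt⟩),
      max_eq_left (by linarith)]
    field_simp
    simp
  · rw [indicator_of_notMem (mt Set.mem_Iic.1 hxt), indicator_of_notMem fun h => hxt h.2,
      max_eq_right (by linarith)]
    simp

theorem card_le_sum_indicator_Iic_sub_div {ι : Type*} [Fintype ι] {x : ι → ℝ} (hx : ∀ i, 0 < x i)
    {t : ℝ} (ht : 0 < t) (B : Finset ι) :
    (#B : ℝ) ≤ ∑ k, (Iic t).indicator 1 (x k)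
      - (∑ k, (Ioc 0 t).indicator id (x k) - ∑ i ∈ B, x i) / t := by
  have hB : #B * t - ∑ i ∈ B, x i ≤ ∑ k, max (t - x k) 0 := calc
    #B * t - ∑ i ∈ B, x i = ∑ i ∈ B, (t - x i) := by simp [sum_sub_distrib]
    _ ≤ ∑ i ∈ B, max (t - x i) 0 := sum_le_sum fun i _ => le_max_left _ _
    _ ≤ ∑ k, max (t - x k) 0 :=
      sum_le_sum_of_subset_of_nonneg (subset_univ B) fun k _ _ => le_max_right _ _
  have hsum : ∑ k, (Iic t).indicator 1 (x k) - (∑ k, (Ioc 0 t).indicator id (x k)) / t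
      = (∑ k, max (t - x k) 0) / t := by
    rw [sum_div, ← sum_sub_distrib, sum_div]
    exact sum_congr rfl fun k _ => indicator_Iic_sub_indicator_Ioc_div_eq_max (hx k) ht
  have hcard : (#B : ℝ) ≤ (∑ k, max (t - x k) 0) / t + (∑ i ∈ B, x i) / t := by
    rw [← add_div, le_div_iff₀ ht]
    linarith
  rw [sub_div]
  linarith

theorem Finset.eq_of_card_eq_of_forall_lt_imp_mem {ι α : Type*} [LinearOrder α] {f : ι → α}
    (hf : Function.Injective f) {B C : Finset ι} (hB : ∀ i ∈ B, ∀ j, f j < f i → j ∈ B)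
    (hC : ∀ i ∈ C, ∀ j, f j < f i → j ∈ C) (h : #B = #C) : B = C := by
  by_contra hne
  obtain ⟨i, hiB, hiC⟩ := not_subset.1 fun hBC => hne (eq_of_subset_of_card_le hBC h.ge)
  obtain ⟨j, hjC, hjB⟩ := not_subset.1 fun hCB => hne (eq_of_subset_of_card_le hCB h.le).symm
  rcases lt_or_gt_of_ne (hf.ne (ne_of_mem_of_not_mem hjC hiC).symm) with hij | hji
  · exact hiC (hC j hjC i hij)
  · exact hjB (hB i hiB j hji)

section Measurability

variable {Ω : Type*} [MeasurableSpace Ω]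

theorem measurable_finset_filter {β : Type*} (S : Finset β) {p : β → Ω → Prop}
    (hp : ∀ b, MeasurableSet {ω | p b ω}) : Measurable fun ω => S.filter (p · ω) :=
  measurable_finset_iff.2 fun b => by
    simpa only [mem_filter] using measurable_const.and (measurableSet_setOfPred.1 (hp b))

theorem measurable_finset_sum_of_measurable_finset {ι M : Type*} [Countable ι] [AddCommMonoid M]
    [MeasurableSpace M] [MeasurableAdd₂ M] {A : Ω → Finset ι} (hA : Measurable A)
    {X : ι → Ω → M} (hX : ∀ i, Measurable (X i)) : Measurable fun ω => ∑ i ∈ A ω, X i ω :=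
  (measurable_from_prod_countable_right (f := fun p : Finset ι × Ω => ∑ i ∈ p.1, X i p.2)
    fun B => Finset.measurable_sum B fun i _ => hX i).comp (hA.prodMk measurable_id)

theorem measurable_of_lexLowerClosed {ι : Type*} [Fintype ι] [LinearOrder ι]
    {X : ι → Ω → ℝ} (hX : ∀ i, Measurable (X i)) {A : Ω → Finset ι}
    (hA_card : Measurable fun ω => #(A ω))
    (hA_lower : ∀ ω, ∀ i ∈ A ω, ∀ j, toLex (X j ω, j) < toLex (X i ω, i) → j ∈ A ω) :
    Measurable A := by
  refine measurable_to_countable' fun B => ?_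
  have hfiber : A ⁻¹' {B} = {ω | #(A ω) = #B} ∩
      {ω | ∀ i ∈ B, ∀ j, toLex (X j ω, j) < toLex (X i ω, i) → j ∈ B} := by
    ext ω
    refine ⟨fun h => ?_, fun ⟨hcard, hB⟩ => ?_⟩
    · rw [Set.mem_preimage, Set.mem_singleton_iff] at h
      exact ⟨congrArg card h, h ▸ hA_lower ω⟩
    · exact eq_of_card_eq_of_forall_lt_imp_mem (f := fun j => toLex (X j ω, j))
        (fun j k h => congrArg Prod.snd (congrArg ofLex h)) (hA_lower ω) hB hcard
  rw [hfiber]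
  refine (hA_card (measurableSet_singleton _)).inter (measurableSet_setOfPred.2 ?_)
  simp only [Prod.Lex.toLex_lt_toLex]
  fun_prop

theorem measurable_sup_card_filter_sum_le {ι : Type*} [Fintype ι] {X : ι → Ω → ℝ}
    (hX : ∀ i, Measurable (X i)) (s : ℝ) :
    Measurable fun ω => (univ.powerset.filter fun B : Finset ι => ∑ i ∈ B, X i ω ≤ s).sup card :=
  (measurable_of_countable _).comp (measurable_finset_filter _ fun B =>
    measurableSet_le (measurable_sum B fun i _ => hX i) measurable_const)

end Measurability

section Integrals

variable {Ω β : Type*} [MeasurableSpace Ω] [MeasurableSpace β] {μ : Measure Ω}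

theorem integral_indicator_comp {Y : Ω → β} (hY : Measurable Y) {S : Set β}
    (hS : MeasurableSet S) {g : β → ℝ} (hg : Measurable g) :
    ∫ ω, S.indicator g (Y ω) ∂μ = ∫ y in S, g y ∂μ.map Y := by
  rw [← integral_indicator hS, integral_map hY.aemeasurable (hg.indicator hS).aestronglyMeasurable]

theorem integrable_indicator_comp [IsFiniteMeasure μ] {Y : Ω → β} (hY : Measurable Y) {S : Set β}
    (hS : MeasurableSet S) {g : β → ℝ} (hg : Measurable g) {C : ℝ} (hC : ∀ y ∈ S, |g y| ≤ C) :
    Integrable (fun ω => S.indicator g (Y ω)) μ := by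
  refine .of_bound ((hg.indicator hS).comp hY).aestronglyMeasurable (max C 0)
    (ae_of_all _ fun ω => ?_)
  by_cases hYω : Y ω ∈ S
  · rw [indicator_of_mem hYω]
    exact le_max_of_le_left (hC _ hYω)
  · simp [indicator_of_notMem hYω]

theorem refined_brs_inequality [IsFiniteMeasure μ] {ι : Type*} [Fintype ι] {X : ι → Ω → ℝ}
    (hX : ∀ k, Measurable (X k)) (hX_pos : ∀ k ω, 0 < X k ω) {t : ℝ} (ht : 0 < t)
    {A : Ω → Finset ι} (hA_card : Measurable fun ω => #(A ω))
    (hS : Integrable (fun ω => ∑ i ∈ A ω, X i ω) μ) :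
    ∫ ω, (#(A ω) : ℝ) ∂μ ≤ ∑ k, (μ.map (X k) (Iic t)).toReal
      - (∑ k, ∫ x in Ioc 0 t, x ∂μ.map (X k) - ∫ ω, ∑ i ∈ A ω, X i ω ∂μ) / t := by
  have hI₁ : ∀ k, Integrable (fun ω => (Iic t).indicator 1 (X k ω)) μ := fun k =>
    integrable_indicator_comp (hX k) measurableSet_Iic measurable_one (C := 1) (by simp)
  have hI₂ : ∀ k, Integrable (fun ω => (Ioc 0 t).indicator id (X k ω)) μ := fun k =>
    integrable_indicator_comp (hX k) measurableSet_Ioc measurable_id (C := t)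
      fun y hy => by simpa [abs_of_pos hy.1] using hy.2
  have hI₁_sum := integrable_finsetSum univ fun k _ => hI₁ k
  have hI₂S_sum : Integrable (fun ω =>
      (∑ k, (Ioc 0 t).indicator id (X k ω) - ∑ i ∈ A ω, X i ω) / t) μ :=
    ((integrable_finsetSum univ fun k _ => hI₂ k).sub hS).div_const t
  have hcard : Integrable (fun ω => (#(A ω) : ℝ)) μ :=
    .of_bound (measurable_of_countable _ |>.comp hA_card).aestronglyMeasurable (Fintype.card ι)
      (ae_of_all _ fun ω => by simpa using card_le_univ (A ω))
  calc ∫ ω, (#(A ω) : ℝ) ∂μ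
      ≤ ∫ ω, (∑ k, (Iic t).indicator 1 (X k ω)
          - (∑ k, (Ioc 0 t).indicator id (X k ω) - ∑ i ∈ A ω, X i ω) / t) ∂μ :=
        integral_mono hcard (hI₁_sum.sub hI₂S_sum)
          fun ω => card_le_sum_indicator_Iic_sub_div (hX_pos · ω) ht (A ω)
    _ = _ := by
      rw [integral_sub hI₁_sum hI₂S_sum, integral_div,
        integral_sub (integrable_finsetSum univ fun k _ => hI₂ k) hS,
        integral_finsetSum _ fun k _ => hI₁ k, integral_finsetSum _ fun k _ => hI₂ k]
      simp [integral_indicator_comp (hX _) measurableSet_Iic measurable_one,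
        integral_indicator_comp (hX _) measurableSet_Ioc measurable_id, measureReal_def]

end Integrals

theorem brs_inequality_corollary_general
    {Ω : Type*} [MeasureSpace Ω] [IsProbabilityMeasure (ℙ : Measure Ω)]
    (n : ℕ) (s t : ℝ) (ht : 0 < t)
    (X : Fin n → Ω → ℝ) (hXmeas : ∀ k, Measurable (X k))
    (hXpos : ∀ k ω, 0 < X k ω)
    (F : Fin n → ℝ → ℝ)
    (hF : ∀ k x, F k x = ((Measure.map (X k) ℙ) (Iic x)).toReal)
    (hBRS : ∑ k : Fin n, ∫ x in Ioc (0:ℝ) t, x ∂(Measure.map (X k) ℙ) = s)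
    (N : Ω → ℕ)
    (hN : ∀ ω, N ω = ((Finset.univ.powerset.filter
      (fun A : Finset (Fin n) => ∑ i ∈ A, X i ω ≤ s)).sup Finset.card))
    (A : Ω → Finset (Fin n))
    (hAcard : ∀ ω, (A ω).card = N ω)
    (hAsum : ∀ ω, ∑ i ∈ A ω, X i ω ≤ s)
    (hAinit : ∀ ω, ∀ i ∈ A ω, ∀ j,
      (X j ω < X i ω ∨ (X j ω = X i ω ∧ j < i)) → j ∈ A ω) :
    ∫ ω, (N ω : ℝ) ≤
      (ℙ {ω | N ω < n}).toReal *
        ((∑ k : Fin n, F k t) - (s - ∫ ω, ∑ i ∈ A ω, X i ω) / t)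
      + (n : ℝ) * (1 - (ℙ {ω | N ω < n}).toReal) := by
  have hA_card : Measurable fun ω => #(A ω) := by
    simpa only [hAcard, hN] using measurable_sup_card_filter_sum_le hXmeas s
  have hA : Measurable A := measurable_of_lexLowerClosed hXmeas hA_card
    fun ω i hi j hj => hAinit ω i hi j (Prod.Lex.toLex_lt_toLex.1 hj)
  have hS : Integrable (fun ω => ∑ i ∈ A ω, X i ω) ℙ :=
    .of_bound (measurable_finset_sum_of_measurable_finset hA hXmeas).aestronglyMeasurable s
      (ae_of_all _ fun ω => by
        rw [Real.norm_of_nonneg (sum_nonneg fun i _ => (hXpos i ω).le)]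
        exact hAsum ω)
  have hEN : ∫ ω, (N ω : ℝ) ≤ (∑ k, F k t) - (s - ∫ ω, ∑ i ∈ A ω, X i ω) / t := by
    simpa only [hAcard, hBRS, hF] using refined_brs_inequality hXmeas hXpos ht hA_card hS
  have hR : (∑ k, F k t) - (s - ∫ ω, ∑ i ∈ A ω, X i ω) / t ≤ n := by
    have hF_le : ∑ k, F k t ≤ n := by
      have hF_le_one : ∀ k, F k t ≤ 1 := fun k => by
        have := Measure.isProbabilityMeasure_map (μ := ℙ) (hXmeas k).aemeasurable
        rw [hF]
        exact measureReal_le_one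
      simpa using sum_le_card_nsmul univ (F · t) 1 fun k _ => hF_le_one k
    have hES : ∫ ω, ∑ i ∈ A ω, X i ω ≤ s := by
      simpa using integral_mono hS (integrable_const s) hAsum
    have hdeficit : 0 ≤ (s - ∫ ω, ∑ i ∈ A ω, X i ω) / t := div_nonneg (by linarith) ht.le
    linarith
  have hp : (ℙ {ω | N ω < n}).toReal ≤ 1 := measureReal_le_one
  linarith [mul_le_mul_of_nonneg_left hR (sub_nonneg.2 hp)]

/-- Corollary to the refined BRS-inequality: with `p_n = P(N(n,s) < n)`,
`E[N(n,s)] ≤ p_n·(∑ k, F k t − (s − E[S_{A(n,s)}])/t) + n·(1 − p_n)`. -/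
theorem brs_inequality_corollary
    {Ω : Type*} [MeasureSpace Ω] [IsProbabilityMeasure (ℙ : Measure Ω)]
    (n : ℕ) (s t : ℝ) (hs : 0 < s) (ht : 0 < t)
    (X : Fin n → Ω → ℝ) (hXmeas : ∀ k, Measurable (X k))
    (hXpos : ∀ k ω, 0 < X k ω)
    (F : Fin n → ℝ → ℝ)
    (hF : ∀ k x, F k x = ((Measure.map (X k) ℙ) (Iic x)).toReal)
    (hBRS : ∑ k : Fin n, ∫ x in Ioc (0:ℝ) t, x ∂(Measure.map (X k) ℙ) = s)
    (N : Ω → ℕ)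
    (hN : ∀ ω, N ω = ((Finset.univ.powerset.filter
      (fun A : Finset (Fin n) => ∑ i ∈ A, X i ω ≤ s)).sup Finset.card))
    (A : Ω → Finset (Fin n))
    (hAcard : ∀ ω, (A ω).card = N ω)
    (hAsum : ∀ ω, ∑ i ∈ A ω, X i ω ≤ s)
    (hAinit : ∀ ω, ∀ i ∈ A ω, ∀ j,
      (X j ω < X i ω ∨ (X j ω = X i ω ∧ j < i)) → j ∈ A ω) :
    ∫ ω, (N ω : ℝ) ≤
      (ℙ {ω | N ω < n}).toReal *
        ((∑ k : Fin n, F k t) - (s - ∫ ω, ∑ i ∈ A ω, X i ω) / t)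
      + (n : ℝ) * (1 - (ℙ {ω | N ω < n}).toReal) :=
  brs_inequality_corollary_general n s t ht X hXmeas hXpos F hF hBRS N hN A hAcard hAsum hAinit
end

section
/- If X_1,...,X_n are (possibly dependent) random variables uniformly distributed on [0,1] and 0 < s ≤ n/2, then E[N(n,s)] ≤ √(2sn). -/
/-!
If a set `A` of the `X i` sums to at most `s`, then for every `t` we get
`#A * t ≤ s + ∑ i, (t - X i)⁺`, because `t ≤ x + (t - x)⁺` and `(t - x)⁺ ≥ 0`.
Taking expectations, `E[(t - U)⁺] ≤ t² / 2` for `U` uniform on `[0, 1]` gives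
`E[N] * t ≤ s + n t² / 2`, and the BRS choice `t = √(2s/n)`, i.e. `n t² / 2 = s`,
yields `E[N] ≤ 2s / t = √(2sn)`.
-/

open MeasureTheory ProbabilityTheory Finset Set
open scoped Classical

noncomputable def maxCardSumLE {ι : Type*} [Fintype ι] (x : ι → ℝ) (s : ℝ) : ℕ :=
  (univ.powerset.filter fun A : Finset ι => ∑ i ∈ A, x i ≤ s).sup card

lemma card_mul_le_add_sum_posPart {ι : Type*} [Fintype ι] (x : ι → ℝ) {A : Finset ι} {s : ℝ}
    (hA : ∑ i ∈ A, x i ≤ s) (t : ℝ) : (#A : ℝ) * t ≤ s + ∑ i, (t - x i)⁺ :=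
  calc (#A : ℝ) * t = ∑ i ∈ A, t := by rw [sum_const, nsmul_eq_mul]
    _ ≤ ∑ i ∈ A, (x i + (t - x i)⁺) :=
        sum_le_sum fun i _ => by linarith [le_posPart (t - x i)]
    _ = ∑ i ∈ A, x i + ∑ i ∈ A, (t - x i)⁺ := sum_add_distrib
    _ ≤ s + ∑ i, (t - x i)⁺ :=
        add_le_add hA (sum_le_univ_sum_of_nonneg fun i => posPart_nonneg _)

lemma maxCardSumLE_mul_le {ι : Type*} [Fintype ι] (x : ι → ℝ) {s : ℝ} (hs : 0 ≤ s) (t : ℝ) :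
    (maxCardSumLE x s : ℝ) * t ≤ s + ∑ i, (t - x i)⁺ := by
  obtain ⟨A, hA, hmax⟩ := exists_mem_eq_sup
    (univ.powerset.filter fun A : Finset ι => ∑ i ∈ A, x i ≤ s) ⟨∅, by simp [hs]⟩ card
  rw [maxCardSumLE, hmax]
  exact card_mul_le_add_sum_posPart x (mem_filter.1 hA).2 t

lemma intervalIntegral_posPart_sub_le {t : ℝ} (ht : 0 ≤ t) :
    ∫ x in (0 : ℝ)..1, (t - x)⁺ ≤ t ^ 2 / 2 := by
  have hf : Continuous fun x : ℝ => (t - x)⁺ := by fun_prop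
  set M := max 1 t
  have hint : ∀ a b, IntervalIntegrable (fun x : ℝ => (t - x)⁺) volume a b :=
    hf.intervalIntegrable
  have hleft : EqOn (fun x : ℝ => (t - x)⁺) (fun x => t - x) (uIcc 0 t) := fun x hx => by
    rw [uIcc_of_le ht] at hx
    exact posPart_eq_self.2 (by linarith [hx.2])
  have hright : EqOn (fun x : ℝ => (t - x)⁺) 0 (uIcc t M) := fun x hx => by
    rw [uIcc_of_le (le_max_right 1 t)] at hx
    exact posPart_eq_zero.2 (by linarith [hx.1])
  calc ∫ x in (0 : ℝ)..1, (t - x)⁺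
      ≤ (∫ x in (0 : ℝ)..1, (t - x)⁺) + ∫ x in (1 : ℝ)..M, (t - x)⁺ :=
        le_add_of_nonneg_right <|
          intervalIntegral.integral_nonneg (le_max_left 1 t) fun x _ => posPart_nonneg _
    _ = (∫ x in (0 : ℝ)..t, (t - x)⁺) + ∫ x in t..M, (t - x)⁺ := by
        rw [intervalIntegral.integral_add_adjacent_intervals (hint _ _) (hint _ _),
          intervalIntegral.integral_add_adjacent_intervals (hint _ _) (hint _ _)]
    _ = t ^ 2 / 2 := by
        rw [intervalIntegral.integral_congr hleft, intervalIntegral.integral_congr hright,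
          intervalIntegral.integral_sub intervalIntegrable_const
            intervalIntegral.intervalIntegrable_id]
        simp
        ring

section UniformLaw

variable {Ω : Type*} [MeasurableSpace Ω] {μ : Measure Ω} {U : Ω → ℝ} {a b : ℝ} {g : ℝ → ℝ}

lemma integrable_comp_of_map_eq_restrict_Icc (hU : Measurable U)
    (hlaw : μ.map U = volume.restrict (Icc a b)) (hg : Continuous g) :
    Integrable (fun ω => g (U ω)) μ := by
  refine (integrable_map_measure hg.aestronglyMeasurable hU.aemeasurable).1 ?_
  rw [hlaw]
  exact hg.integrableOn_Icc

lemma integral_comp_of_map_eq_restrict_Icc (hU : Measurable U)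
    (hlaw : μ.map U = volume.restrict (Icc a b)) (hab : a ≤ b) (hg : Continuous g) :
    ∫ ω, g (U ω) ∂μ = ∫ x in a..b, g x := by
  rw [← integral_map hU.aemeasurable hg.aestronglyMeasurable, hlaw, integral_Icc_eq_integral_Ioc,
    intervalIntegral.integral_of_le hab]

end UniformLaw

lemma integral_maxCardSumLE_mul_le {ι : Type*} [Fintype ι] {Ω : Type*} [MeasurableSpace Ω]
    {μ : Measure Ω} [IsProbabilityMeasure μ] {X : ι → Ω → ℝ} (hX : ∀ i, Measurable (X i))
    (hlaw : ∀ i, μ.map (X i) = volume.restrict (Icc 0 1)) {s t : ℝ} (hs : 0 ≤ s) (ht : 0 ≤ t) :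
    (∫ ω, (maxCardSumLE (fun i => X i ω) s : ℝ) ∂μ) * t ≤ s + Fintype.card ι * (t ^ 2 / 2) := by
  have hg : Continuous fun x : ℝ => (t - x)⁺ := by fun_prop
  have hint i : Integrable (fun ω => (t - X i ω)⁺) μ :=
    integrable_comp_of_map_eq_restrict_Icc (g := fun x => (t - x)⁺) (hX i) (hlaw i) hg
  rw [← integral_mul_const]
  calc ∫ ω, (maxCardSumLE (fun i => X i ω) s : ℝ) * t ∂μ
      ≤ ∫ ω, (s + ∑ i, (t - X i ω)⁺) ∂μ :=
        integral_mono_of_nonneg (ae_of_all _ fun ω => by positivity)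
          ((integrable_const s).add (integrable_finsetSum _ fun i _ => hint i))
          (ae_of_all _ fun ω => maxCardSumLE_mul_le _ hs t)
    _ = s + ∑ i, ∫ ω, (t - X i ω)⁺ ∂μ := by
        rw [integral_add (integrable_const s) (integrable_finsetSum _ fun i _ => hint i),
          integral_finsetSum _ fun i _ => hint i]
        simp
    _ ≤ s + ∑ _i : ι, t ^ 2 / 2 := by
        gcongr with i
        rw [integral_comp_of_map_eq_restrict_Icc (hX i) (hlaw i) zero_le_one hg]
        exact intervalIntegral_posPart_sub_le ht
    _ = s + Fintype.card ι * (t ^ 2 / 2) := by simp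

theorem brs_uniform_bound_general
    {Ω : Type*} [MeasureSpace Ω] [IsProbabilityMeasure (ℙ : Measure Ω)]
    (n : ℕ) (s : ℝ) (hs : 0 < s)
    (X : Fin n → Ω → ℝ) (hXmeas : ∀ k, Measurable (X k))
    (hlaw : ∀ k, Measure.map (X k) ℙ = volume.restrict (Icc (0:ℝ) 1))
    (N : Ω → ℕ)
    (hN : ∀ ω, N ω = ((Finset.univ.powerset.filter
      (fun A : Finset (Fin n) => ∑ i ∈ A, X i ω ≤ s)).sup Finset.card)) :
    ∫ ω, (N ω : ℝ) ≤ Real.sqrt (2 * s * n) := by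
  rcases Nat.eq_zero_or_pos n with rfl | hn
  · simp [hN, Finset.filter_singleton, hs.le]
  have hn' : (0 : ℝ) < n := Nat.cast_pos.2 hn
  set t := √(2 * s / n)
  have ht : 0 < t := by positivity
  have ht2 : t ^ 2 = 2 * s / n := Real.sq_sqrt (by positivity)
  have hbound := integral_maxCardSumLE_mul_le hXmeas hlaw hs.le ht.le
  rw [Fintype.card_fin] at hbound
  have hN' : N = fun ω => maxCardSumLE (fun i => X i ω) s := funext hN
  have hsqrt : √(2 * s * n) * t = 2 * s := by
    rw [← Real.sqrt_mul (by positivity), show 2 * s * n * (2 * s / n) = (2 * s) ^ 2 by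
      field_simp, Real.sqrt_sq (by positivity)]
  refine le_of_mul_le_mul_right ?_ ht
  rw [hN', hsqrt]
  calc _ ≤ s + n * (t ^ 2 / 2) := hbound
    _ = 2 * s := by rw [ht2]; field_simp; ring

/-- BRS bound for uniform marginals: if `X 1, …, X n` are (possibly dependent)
random variables each uniformly distributed on `[0,1]` and `0 < s ≤ n/2`, then
`E[N(n,s)] ≤ √(2 s n)`. -/
theorem brs_uniform_bound
    {Ω : Type*} [MeasureSpace Ω] [IsProbabilityMeasure (ℙ : Measure Ω)]
    (n : ℕ) (s : ℝ) (hs : 0 < s) (hs2 : s ≤ n / 2)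
    (X : Fin n → Ω → ℝ) (hXmeas : ∀ k, Measurable (X k))
    (hlaw : ∀ k, Measure.map (X k) ℙ = volume.restrict (Icc (0:ℝ) 1))
    (N : Ω → ℕ)
    (hN : ∀ ω, N ω = ((Finset.univ.powerset.filter
      (fun A : Finset (Fin n) => ∑ i ∈ A, X i ω ≤ s)).sup Finset.card)) :
    ∫ ω, (N ω : ℝ) ≤ Real.sqrt (2 * s * n) :=
  brs_uniform_bound_general n s hs X hXmeas hlaw N hN
end

section
/- Let X_k be uniform on [0,k] for k = 1,...,n with n ≥ 4, and take s = 1. Then the BRS-equation solution is t(n,1) = √(2/H_n) where H_n is the n-th harmonic number, and consequently E[N(n,1)] ≤ √(2·H_n). -/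
/-!
If `B = {i | x i ≤ t}`, every `A` with `∑ i ∈ A, x i ≤ s` satisfies
`#A ≤ #B + (s - ∑ i ∈ B, x i) / t`, because `B` minimises `∑ i ∈ A, (x i - t)` over all `A`.
Taking expectations, `E[N] ≤ ∑ k, P(X k ≤ t) + (s - ∑ k, E[X k; X k ≤ t]) / t` for every `t > 0`,
and the second term vanishes when `t` solves the BRS equation. For `X k` uniform on `[0, k]` and
`t ≤ 1` one has `P(X k ≤ t) = t / k` and `E[X k; X k ≤ t] = t ^ 2 / (2 k)`, so `t = √(2 / H_n)`
(which is `≤ 1` because `H_n > 2` for `n ≥ 4`) solves it, and `E[N] ≤ t H_n = √(2 H_n)`.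
-/

open MeasureTheory ProbabilityTheory Finset Set
open scoped Classical ENNReal

theorem sum_filter_nonpos_le_sum {ι : Type*} [Fintype ι] (f : ι → ℝ) (A : Finset ι) :
    ∑ i with f i ≤ 0, f i ≤ ∑ i ∈ A, f i :=
  calc ∑ i with f i ≤ 0, f i
      ≤ ∑ i ∈ A with f i ≤ 0, f i :=
        sum_le_sum_of_subset_of_nonpos' (filter_subset_filter _ (subset_univ A))
          (fun _ hi _ => (mem_filter.1 hi).2)
    _ ≤ ∑ i ∈ A, f i :=
        sum_le_sum_of_subset_of_nonneg (filter_subset _ A)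
          (fun _ hi hni => le_of_lt (not_le.1 fun h => hni (mem_filter.2 ⟨hi, h⟩)))

theorem card_le_card_filter_le_add_div {ι : Type*} [Fintype ι] (x : ι → ℝ) {s t : ℝ}
    (ht : 0 < t) {A : Finset ι} (hA : ∑ i ∈ A, x i ≤ s) :
    (#A : ℝ) ≤ #{i | x i ≤ t} + (s - ∑ i with x i ≤ t, x i) / t := by
  have key := sum_filter_nonpos_le_sum (fun i => x i - t) A
  simp only [sub_nonpos, sum_sub_distrib, sum_const, nsmul_eq_mul] at key
  rw [← sub_le_iff_le_add', le_div_iff₀ ht]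
  linarith

noncomputable def maxCount {ι : Type*} [Fintype ι] (x : ι → ℝ) (s : ℝ) : ℕ :=
  (univ.powerset.filter fun A : Finset ι => ∑ i ∈ A, x i ≤ s).sup card

theorem maxCount_le {ι : Type*} [Fintype ι] (x : ι → ℝ) {s t : ℝ} (hs : 0 ≤ s) (ht : 0 < t) :
    (maxCount x s : ℝ) ≤ #{i | x i ≤ t} + (s - ∑ i with x i ≤ t, x i) / t := by
  obtain ⟨A, hA, hmax⟩ := exists_mem_eq_sup
    (univ.powerset.filter fun A : Finset ι => ∑ i ∈ A, x i ≤ s) ⟨∅, by simp [hs]⟩ card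
  rw [maxCount, hmax]
  exact card_le_card_filter_le_add_div x ht (mem_filter.1 hA).2

theorem integral_indicator_comp_s8 {α Ω : Type*} [MeasurableSpace α] [MeasurableSpace Ω]
    {μ : Measure Ω} {X : Ω → α} (hX : Measurable X) {s : Set α} (hs : MeasurableSet s)
    {f : α → ℝ} (hf : Measurable f) :
    ∫ ω, s.indicator f (X ω) ∂μ = ∫ x in s, f x ∂(μ.map X) := by
  rw [← integral_indicator hs, integral_map hX.aemeasurable (hf.indicator hs).aestronglyMeasurable]

theorem integral_maxCount_le {ι Ω : Type*} [Fintype ι] [MeasurableSpace Ω] {μ : Measure Ω}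
    [IsProbabilityMeasure μ] {X : ι → Ω → ℝ} (hX : ∀ i, Measurable (X i)) {s t : ℝ}
    (hs : 0 ≤ s) (ht : 0 < t) (hint : ∀ i, IntegrableOn id (Iic t) (μ.map (X i))) :
    ∫ ω, (maxCount (X · ω) s : ℝ) ∂μ ≤
      ∑ i, (μ.map (X i)).real (Iic t) + (s - ∑ i, ∫ x in Iic t, x ∂(μ.map (X i))) / t := by
  set count := fun ω => ∑ i, (Iic t).indicator (fun _ => (1 : ℝ)) (X i ω)
  set trunc := fun ω => ∑ i, (Iic t).indicator id (X i ω)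
  have hcount_i (i : ι) : Integrable (fun ω => (Iic t).indicator (fun _ => (1 : ℝ)) (X i ω)) μ :=
    ((integrable_const (1 : ℝ)).indicator measurableSet_Iic).comp_measurable (hX i)
  have htrunc_i (i : ι) : Integrable (fun ω => (Iic t).indicator id (X i ω)) μ :=
    ((hint i).integrable_indicator measurableSet_Iic).comp_measurable (hX i)
  have hcount : Integrable count μ := integrable_finsetSum _ fun i _ => hcount_i i
  have htrunc : Integrable trunc μ := integrable_finsetSum _ fun i _ => htrunc_i i
  have hrest : Integrable (fun ω => (s - trunc ω) / t) μ :=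
    ((integrable_const s).sub htrunc).div_const t
  have hbound (ω : Ω) : (maxCount (X · ω) s : ℝ) ≤ count ω + (s - trunc ω) / t := by
    simpa only [count, trunc, indicator_apply, Set.mem_Iic, id, natCast_card_filter, sum_filter]
      using maxCount_le (X · ω) hs ht
  calc ∫ ω, (maxCount (X · ω) s : ℝ) ∂μ
      ≤ ∫ ω, (count ω + (s - trunc ω) / t) ∂μ :=
        integral_mono_of_nonneg (.of_forall fun _ => Nat.cast_nonneg _) (hcount.add hrest)
          (.of_forall hbound)
    _ = _ := by
      rw [integral_add hcount hrest, integral_div, integral_sub (integrable_const s) htrunc,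
        integral_const, probReal_univ, one_smul, integral_finsetSum _ fun i _ => hcount_i i,
        integral_finsetSum _ fun i _ => htrunc_i i]
      simp only [integral_indicator_comp_s8 (hX _) measurableSet_Iic measurable_const,
        integral_indicator_comp_s8 (hX _) measurableSet_Iic measurable_id, setIntegral_const,
        smul_eq_mul, mul_one, id]

theorem Set.Iic_inter_Icc_of_le {α : Type*} [Preorder α] {a t c : α} (htc : t ≤ c) :
    Iic t ∩ Icc a c = Icc a t := by
  ext x
  simp only [mem_inter_iff, Set.mem_Iic, Set.mem_Icc]
  exact ⟨fun h => ⟨h.2.1, h.1⟩, fun h => ⟨h.2, h.1, h.2.trans htc⟩⟩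

section UniformIcc

variable {c t : ℝ}

theorem cond_Icc_zero_eq_smul (c : ℝ) :
    volume[|Icc (0 : ℝ) c] = (ENNReal.ofReal c)⁻¹ • volume.restrict (Icc 0 c) := by
  rw [ProbabilityTheory.cond, Real.volume_Icc, sub_zero]

theorem setIntegral_cond_Icc_zero (hc : 0 < c) {s : Set ℝ} (hs : MeasurableSet s) (f : ℝ → ℝ) :
    ∫ x in s, f x ∂volume[|Icc (0 : ℝ) c] = (∫ x in s ∩ Icc 0 c, f x) / c := by
  rw [cond_Icc_zero_eq_smul, Measure.restrict_smul, integral_smul_measure,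
    Measure.restrict_restrict hs, ENNReal.toReal_inv, ENNReal.toReal_ofReal hc.le, smul_eq_mul,
    inv_mul_eq_div]

theorem integrable_id_cond_Icc_zero (hc : 0 < c) : Integrable id volume[|Icc (0 : ℝ) c] := by
  rw [cond_Icc_zero_eq_smul]
  exact Integrable.smul_measure (continuous_id.integrableOn_Icc : IntegrableOn id (Icc 0 c))
    (ENNReal.inv_ne_top.2 (ENNReal.ofReal_pos.2 hc).ne')

theorem measureReal_cond_Icc_zero_Iic (hc : 0 < c) (ht : 0 ≤ t) (htc : t ≤ c) :
    (volume[|Icc (0 : ℝ) c]).real (Iic t) = t / c := by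
  have h := setIntegral_cond_Icc_zero hc (measurableSet_Iic (a := t)) fun _ => (1 : ℝ)
  rwa [setIntegral_const, setIntegral_const, Iic_inter_Icc_of_le htc,
    Real.volume_real_Icc_of_le ht, sub_zero, smul_eq_mul, smul_eq_mul, mul_one, mul_one] at h

theorem setIntegral_Iic_id_cond_Icc_zero (hc : 0 < c) (ht : 0 ≤ t) (htc : t ≤ c) :
    ∫ x in Iic t, x ∂volume[|Icc (0 : ℝ) c] = t ^ 2 / 2 / c := by
  rw [setIntegral_cond_Icc_zero hc measurableSet_Iic, Iic_inter_Icc_of_le htc,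
    integral_Icc_eq_integral_Ioc, ← intervalIntegral.integral_of_le ht, integral_id]
  ring

theorem setIntegral_Ioc_id_cond_Icc_zero (hc : 0 < c) (ht : 0 ≤ t) (htc : t ≤ c) :
    ∫ x in Ioc 0 t, x ∂volume[|Icc (0 : ℝ) c] = t ^ 2 / 2 / c := by
  rw [setIntegral_cond_Icc_zero hc measurableSet_Ioc,
    inter_eq_left.2 (Ioc_subset_Icc_self.trans (Icc_subset_Icc_right htc)),
    ← intervalIntegral.integral_of_le ht, integral_id]
  ring

end UniformIcc

theorem two_lt_sum_range_one_div_succ {n : ℕ} (hn : 4 ≤ n) :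
    2 < ∑ k ∈ range n, (1 : ℝ) / (k + 1) :=
  calc (2 : ℝ) < ∑ k ∈ range 4, (1 : ℝ) / (k + 1) := by norm_num [sum_range_succ]
    _ ≤ ∑ k ∈ range n, (1 : ℝ) / (k + 1) :=
      sum_le_sum_of_subset_of_nonneg (range_subset_range.2 hn) fun _ _ _ => by positivity

theorem Real.sqrt_div_mul_self_eq_sqrt_mul {a b : ℝ} (ha : 0 ≤ a) (hb : 0 ≤ b) :
    √(a / b) * b = √(a * b) := by
  rw [Real.sqrt_div' a hb, div_mul_eq_mul_div, mul_div_assoc, Real.div_sqrt, Real.sqrt_mul ha]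

/-- Increasing uniform supports: if `X k` is uniform on `[0,k]`, `k = 1, …, n`,
`n ≥ 4`, and `s = 1`, then `t = √(2/H_n)` solves the BRS-equation
`∑ k, ∫_0^t x dF_k(x) = 1` (where `H_n` is the `n`-th harmonic number), and
consequently `E[N(n,1)] ≤ √(2 H_n)`. -/
theorem brs_uniform_increasing_supports
    {Ω : Type*} [MeasureSpace Ω] [IsProbabilityMeasure (ℙ : Measure Ω)]
    (n : ℕ) (hn : 4 ≤ n)
    (X : Fin n → Ω → ℝ) (hXmeas : ∀ k, Measurable (X k))
    (hlaw : ∀ k : Fin n, Measure.map (X k) ℙ =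
      ((k.1 + 1 : ℝ≥0∞))⁻¹ • volume.restrict (Icc (0:ℝ) (k.1 + 1)))
    (H t : ℝ)
    (hH : H = ∑ k ∈ Finset.range n, (1 : ℝ) / (k + 1))
    (ht : t = Real.sqrt (2 / H))
    (N : Ω → ℕ)
    (hN : ∀ ω, N ω = ((Finset.univ.powerset.filter
      (fun A : Finset (Fin n) => ∑ i ∈ A, X i ω ≤ 1)).sup Finset.card)) :
    (∑ k : Fin n, ∫ x in Ioc (0:ℝ) t, x ∂(Measure.map (X k) ℙ)) = 1 ∧
    ∫ ω, (N ω : ℝ) ≤ Real.sqrt (2 * H) := by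
  have hH2 : 2 < H := hH ▸ two_lt_sum_range_one_div_succ hn
  have hsum (a : ℝ) : ∑ k : Fin n, a / (k.1 + 1 : ℝ) = a * H := by
    rw [hH, mul_sum, Fin.sum_univ_eq_sum_range (fun k => a / (k + 1 : ℝ))]
    exact sum_congr rfl fun _ _ => by ring
  have ht0 : 0 < t := ht ▸ Real.sqrt_pos.2 (by positivity)
  have htH : t ^ 2 / 2 * H = 1 := by
    rw [ht, Real.sq_sqrt (by positivity)]; field_simp
  have hc (k : Fin n) : 0 < (k.1 + 1 : ℝ) := by positivity
  have ht1 : t ≤ 1 := ht ▸ Real.sqrt_le_one.2 ((div_le_one (by linarith)).2 hH2.le)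
  have htc (k : Fin n) : t ≤ k.1 + 1 := ht1.trans (le_add_of_nonneg_left k.1.cast_nonneg)
  have hunif (k : Fin n) : Measure.map (X k) ℙ = volume[|Icc (0 : ℝ) (k.1 + 1)] := by
    rw [hlaw k, cond_Icc_zero_eq_smul]
    norm_cast
  constructor
  · simp_rw [hunif, fun k => setIntegral_Ioc_id_cond_Icc_zero (hc k) ht0.le (htc k), hsum, htH]
  · calc ∫ ω, (N ω : ℝ) = ∫ ω, (maxCount (X · ω) 1 : ℝ) := by simp_rw [hN]; rfl
      _ ≤ _ := integral_maxCount_le hXmeas zero_le_one ht0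
          fun k => hunif k ▸ (integrable_id_cond_Icc_zero (hc k)).integrableOn
      _ = √(2 * H) := by
        simp_rw [hunif, fun k => measureReal_cond_Icc_zero_Iic (hc k) ht0.le (htc k),
          fun k => setIntegral_Iic_id_cond_Icc_zero (hc k) ht0.le (htc k), hsum, htH, sub_self,
          zero_div, add_zero, ht]
        exact Real.sqrt_div_mul_self_eq_sqrt_mul zero_le_two (by linarith)
end

section
/- For the maximum expected density of arrival points of a point process with inter-arrival times X_1,...,X_n (marginals F_k) on a measurable union of inter-arrival intervals of total length s, one has d_max(s) = E[N(n,s)]/s ≤ (1/s)·Σ_{k=1}^n F_k(t(n,s)), with t(n,s) solving the BRS-equation. -/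
open MeasureTheory ProbabilityTheory Finset Set
open scoped Classical

/-!
For every realisation and every `t > 0`, a set `A` of intervals of total length at most `s`
satisfies `#A ≤ s / t + ∑ₖ (1 - Xₖ / t)⁺`: each `i ∈ A` contributes
`1 ≤ Xᵢ / t + (1 - Xᵢ / t)⁺`. Taking expectations, `E (1 - Xₖ / t)⁺ = Fₖ(t) - (1 / t) ∫_{(0,t]} x dFₖ`,
and at the solution `t` of the BRS-equation the truncated means add up to `s`, so the term `s / t`
cancels and `E N ≤ ∑ₖ Fₖ(t)`.
-/

theorem card_le_div_add_sum_max {ι : Type*} [Fintype ι] (x : ι → ℝ) {s t : ℝ} (ht : 0 < t)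
    {A : Finset ι} (hA : ∑ i ∈ A, x i ≤ s) :
    (#A : ℝ) ≤ s / t + ∑ i, max (1 - x i / t) 0 :=
  calc (#A : ℝ) = ∑ i ∈ A, (x i / t + (1 - x i / t)) := by simp
    _ ≤ ∑ i ∈ A, x i / t + ∑ i ∈ A, max (1 - x i / t) 0 := by
        rw [← sum_add_distrib]; gcongr; exact le_max_left _ _
    _ ≤ s / t + ∑ i, max (1 - x i / t) 0 := by
        rw [← sum_div]
        gcongr
        exact subset_univ A

theorem sup_card_le_div_add_sum_max {ι : Type*} [Fintype ι] (x : ι → ℝ) {s t : ℝ}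
    (hs : 0 ≤ s) (ht : 0 < t) :
    (((univ.powerset.filter fun A : Finset ι => ∑ i ∈ A, x i ≤ s).sup card : ℕ) : ℝ) ≤
      s / t + ∑ i, max (1 - x i / t) 0 := by
  obtain ⟨A, hA, hsup⟩ := exists_mem_eq_sup
    (univ.powerset.filter fun A : Finset ι => ∑ i ∈ A, x i ≤ s) ⟨∅, by simp [hs]⟩ card
  rw [hsup]
  exact card_le_div_add_sum_max x ht (mem_filter.1 hA).2

theorem max_one_sub_div_zero_eq_indicator {t : ℝ} (ht : 0 < t) (x : ℝ) :
    max (1 - x / t) 0 = (Iic t).indicator (fun y => 1 - y / t) x := by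
  by_cases hx : x ≤ t
  · have : x / t ≤ 1 := (div_le_one ht).2 hx
    simp [indicator_of_mem (show x ∈ Iic t from hx), this]
  · have : 1 < x / t := (one_lt_div ht).2 (not_le.1 hx)
    rw [indicator_of_notMem (show x ∉ Iic t from hx)]
    exact max_eq_right (by linarith)

theorem integrable_max_one_sub_div_zero (ν : Measure ℝ) [IsFiniteMeasure ν] {t : ℝ} (ht : 0 < t)
    (hpos : ∀ᵐ x ∂ν, 0 < x) : Integrable (fun x => max (1 - x / t) 0) ν := by
  refine (integrable_const (1 : ℝ)).mono' (by fun_prop) ?_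
  filter_upwards [hpos] with x hx
  have : 0 ≤ x / t := by positivity
  rw [Real.norm_of_nonneg (le_max_right _ _)]
  exact max_le (by linarith) zero_le_one

theorem integral_max_one_sub_div_zero (ν : Measure ℝ) [IsFiniteMeasure ν] {t : ℝ} (ht : 0 < t)
    (hpos : ∀ᵐ x ∂ν, 0 < x) :
    ∫ x, max (1 - x / t) 0 ∂ν = ν.real (Iic t) - (∫ x in Ioc 0 t, x ∂ν) / t := by
  have hIoc : Ioc 0 t =ᵐ[ν] Iic t := by
    filter_upwards [hpos] with x hx
    show (x ∈ Ioc 0 t) = (x ∈ Iic t)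
    simp [hx]
  have hid : IntegrableOn (fun x : ℝ => x) (Ioc 0 t) ν :=
    (continuous_id.integrableOn_Icc).mono_set Ioc_subset_Icc_self
  simp_rw [max_one_sub_div_zero_eq_indicator ht]
  rw [integral_indicator measurableSet_Iic, ← setIntegral_congr_set hIoc,
    integral_sub (integrable_const 1) (hid.div_const t), setIntegral_const, integral_div,
    measureReal_congr hIoc, smul_eq_mul, mul_one]

theorem brs_point_process_density_general
    {Ω : Type*} [MeasureSpace Ω] [IsProbabilityMeasure (ℙ : Measure Ω)]
    (n : ℕ) (s t : ℝ) (hs : 0 < s) (ht : 0 < t)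
    (X : Fin n → Ω → ℝ) (hXmeas : ∀ k, Measurable (X k))
    (hXpos : ∀ k ω, 0 < X k ω)
    (F : Fin n → ℝ → ℝ)
    (hF : ∀ k x, F k x = ((Measure.map (X k) ℙ) (Iic x)).toReal)
    (hBRS : ∑ k : Fin n, ∫ x in Ioc (0:ℝ) t, x ∂(Measure.map (X k) ℙ) = s)
    (N : Ω → ℕ)
    (hN : ∀ ω, N ω = ((Finset.univ.powerset.filter
      (fun A : Finset (Fin n) => ∑ i ∈ A, X i ω ≤ s)).sup Finset.card)) :
    (∫ ω, (N ω : ℝ)) / s ≤ (1 / s) * ∑ k : Fin n, F k t := by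
  have hpos k : ∀ᵐ x ∂(Measure.map (X k) ℙ), 0 < x :=
    (ae_map_iff (hXmeas k).aemeasurable measurableSet_Ioi).2 (ae_of_all _ (hXpos k))
  have hint k : Integrable (fun ω => max (1 - X k ω / t) 0) ℙ :=
    (integrable_max_one_sub_div_zero _ ht (hpos k)).comp_measurable (hXmeas k)
  have hexp k : ∫ ω, max (1 - X k ω / t) 0 =
      F k t - (∫ x in Ioc 0 t, x ∂(Measure.map (X k) ℙ)) / t := by
    rw [hF, ← measureReal_def, ← integral_max_one_sub_div_zero _ ht (hpos k),
      integral_map (hXmeas k).aemeasurable (by fun_prop)]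
  have hEN : ∫ ω, (N ω : ℝ) ≤ ∑ k, F k t :=
    calc ∫ ω, (N ω : ℝ) ≤ ∫ ω, (s / t + ∑ k, max (1 - X k ω / t) 0) :=
          integral_mono_of_nonneg (ae_of_all _ fun ω => Nat.cast_nonneg _)
            ((integrable_const _).add (integrable_finsetSum _ fun k _ => hint k))
            (ae_of_all _ fun ω => (congrArg Nat.cast (hN ω)).trans_le
              (sup_card_le_div_add_sum_max (X · ω) hs.le ht))
      _ = ∑ k, F k t := by
          rw [integral_add (integrable_const _) (integrable_finsetSum _ fun k _ => hint k),
            integral_finsetSum _ fun k _ => hint k]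
          simp only [hexp, sum_sub_distrib, ← sum_div, hBRS, integral_const, probReal_univ,
            one_smul]
          ring
  rw [one_div_mul_eq_div]
  exact div_le_div_of_nonneg_right hEN hs.le

/-- Maximum expected density of points of a point process with inter-arrival
times `X 1, …, X n` (marginals `F k`) on a union of inter-arrival intervals of
total length `s`: `d_max(s) = E[N(n,s)]/s ≤ (1/s)·∑ k, F k (t(n,s))`, with
`t(n,s)` solving the BRS-equation. -/
theorem brs_point_process_density
    {Ω : Type*} [MeasureSpace Ω] [IsProbabilityMeasure (ℙ : Measure Ω)]
    (n : ℕ) (s t : ℝ) (hs : 0 < s) (ht : 0 < t)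
    (X : Fin n → Ω → ℝ) (hXmeas : ∀ k, Measurable (X k))
    (hXpos : ∀ k ω, 0 < X k ω)
    (hsT : ∀ ω, s < ∑ k : Fin n, X k ω)
    (F : Fin n → ℝ → ℝ)
    (hF : ∀ k x, F k x = ((Measure.map (X k) ℙ) (Iic x)).toReal)
    (hBRS : ∑ k : Fin n, ∫ x in Ioc (0:ℝ) t, x ∂(Measure.map (X k) ℙ) = s)
    (N : Ω → ℕ)
    (hN : ∀ ω, N ω = ((Finset.univ.powerset.filter
      (fun A : Finset (Fin n) => ∑ i ∈ A, X i ω ≤ s)).sup Finset.card)) :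
    (∫ ω, (N ω : ℝ)) / s ≤ (1 / s) * ∑ k : Fin n, F k t :=
  brs_point_process_density_general n s t hs ht X hXmeas hXpos F hF hBRS N hN
end

section
/- For the sequential knapsack problem with n i.i.d. observations with distribution F and capacity x, the expected number of items packed by any online policy satisfies E[Ñ(n,x)] ≤ E[N(n,x)] ≤ n·F(t(n,x)), where t(n,x) solves n·∫_0^t y dF(y) = x. -/
open MeasureTheory ProbabilityTheory Finset Set
open scoped Classical

/-!
If `A` is a feasible packing and `t` a threshold, then
`t * #A - ∑_{i ∈ A} X i = ∑_{i ∈ A} (t - X i) ≤ ∑_i (t - X i)⁺`, so `t * N ≤ x + ∑_i (t - X i)⁺`.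
For nonnegative `X i` with law `μ`, `E (t - X i)⁺ = t F(t) - ∫_{(0,t]} y dμ = t F(t) - x / n`,
and taking expectations gives `E N ≤ n F(t)`. An online selection is a feasible packing, so
`Ñ ≤ N` pointwise.
-/

section Packing

variable {ι : Type*} [Fintype ι]

noncomputable def maxPackingCard (x : ℝ) (f : ι → ℝ) : ℕ :=
  ((Finset.univ : Finset ι).powerset.filter (fun A => ∑ i ∈ A, f i ≤ x)).sup Finset.card

variable {x : ℝ} {f : ι → ℝ}

lemma card_le_maxPackingCard {A : Finset ι} (hA : ∑ i ∈ A, f i ≤ x) :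
    #A ≤ maxPackingCard x f :=
  Finset.le_sup (f := Finset.card) (mem_filter.mpr ⟨mem_powerset.mpr (subset_univ A), hA⟩)

lemma maxPackingCard_le_card : maxPackingCard x f ≤ Fintype.card ι :=
  Finset.sup_le fun A _ => card_le_univ A

lemma exists_card_eq_maxPackingCard (hx : 0 ≤ x) :
    ∃ A : Finset ι, ∑ i ∈ A, f i ≤ x ∧ #A = maxPackingCard x f := by
  have hne : ((Finset.univ : Finset ι).powerset.filter fun A => ∑ i ∈ A, f i ≤ x).Nonempty :=
    ⟨∅, mem_filter.mpr ⟨empty_mem_powerset _, by simpa using hx⟩⟩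
  obtain ⟨A, hA, hmax⟩ := Finset.exists_mem_eq_sup _ hne Finset.card
  exact ⟨A, (mem_filter.mp hA).2, hmax.symm⟩

lemma mul_card_le_add_sum_posPart {A : Finset ι} (hA : ∑ i ∈ A, f i ≤ x) (t : ℝ) :
    t * #A ≤ x + ∑ i, (t - f i)⁺ :=
  calc t * #A = ∑ i ∈ A, (t - f i) + ∑ i ∈ A, f i := by
        rw [sum_sub_distrib, sum_const, nsmul_eq_mul]; ring
    _ ≤ ∑ i, (t - f i)⁺ + x :=
        add_le_add ((sum_le_sum fun i _ => le_posPart _).trans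
          (sum_le_sum_of_subset_of_nonneg (subset_univ A) fun i _ _ => posPart_nonneg _)) hA
    _ = x + ∑ i, (t - f i)⁺ := add_comm _ _

lemma mul_maxPackingCard_le (hx : 0 ≤ x) (t : ℝ) :
    t * maxPackingCard x f ≤ x + ∑ i, (t - f i)⁺ := by
  obtain ⟨A, hA, hcard⟩ := exists_card_eq_maxPackingCard (f := f) hx
  rw [← hcard]
  exact mul_card_le_add_sum_posPart hA t

variable {Ω : Type*} [MeasurableSpace Ω] {X : ι → Ω → ℝ}

lemma measurable_maxPackingCard (hX : ∀ i, Measurable (X i)) (x : ℝ) :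
    Measurable fun ω => maxPackingCard x fun i => X i ω := by
  have h : (fun ω => maxPackingCard x fun i => X i ω) =
      (Finset.univ : Finset ι).powerset.sup' (powerset_nonempty _)
        (fun A ω => if ∑ i ∈ A, X i ω ≤ x then #A else 0) := by
    ext ω
    rw [Finset.sup'_apply, sup'_eq_sup, sup_ite]
    simp [maxPackingCard]
  rw [h]
  exact Finset.measurable_sup' _ fun A _ =>
    Measurable.ite (measurableSet_le (Finset.measurable_sum _ fun i _ => hX i) measurable_const)
      measurable_const measurable_const

lemma integrable_maxPackingCard {P : Measure Ω} [IsFiniteMeasure P] (hX : ∀ i, Measurable (X i))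
    (x : ℝ) : Integrable (fun ω => (maxPackingCard x fun i => X i ω : ℝ)) P :=
  Integrable.of_bound
    (measurable_from_nat.comp (measurable_maxPackingCard hX x)).aestronglyMeasurable
    (Fintype.card ι) (ae_of_all _ fun ω => by
      simpa using (Nat.cast_le (α := ℝ)).mpr maxPackingCard_le_card)

end Packing

section Expectation

lemma posPart_sub_eq_indicator_sub_indicator {y : ℝ} (hy : 0 ≤ y) (t : ℝ) :
    (t - y)⁺ = (Iic t).indicator (fun _ => t) y - (Ioc 0 t).indicator id y := by
  by_cases hyt : y ≤ t
  · rcases hy.eq_or_lt with rfl | hy0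
    · simp [hyt]
    · simp [hyt, hy0]
  · simp [hyt, (not_le.mp hyt).le]

variable {μ : Measure ℝ}

lemma posPart_sub_ae_eq (hμ : ∀ᵐ y ∂μ, 0 ≤ y) (t : ℝ) :
    (fun y => (t - y)⁺) =ᵐ[μ] (Iic t).indicator (fun _ => t) - (Ioc 0 t).indicator id :=
  hμ.mono fun _ hy => posPart_sub_eq_indicator_sub_indicator hy t

variable [IsFiniteMeasure μ]

lemma integrable_indicator_Ioc_id (t : ℝ) : Integrable ((Ioc 0 t).indicator id) μ :=
  (continuous_id.integrableOn_Icc.mono_set Ioc_subset_Icc_self).integrable_indicator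
    measurableSet_Ioc

lemma integrable_posPart_sub (hμ : ∀ᵐ y ∂μ, 0 ≤ y) (t : ℝ) :
    Integrable (fun y => (t - y)⁺) μ :=
  (((integrable_const t).indicator measurableSet_Iic).sub
    (integrable_indicator_Ioc_id t)).congr (posPart_sub_ae_eq hμ t).symm

lemma integral_posPart_sub (hμ : ∀ᵐ y ∂μ, 0 ≤ y) (t : ℝ) :
    ∫ y, (t - y)⁺ ∂μ = t * μ.real (Iic t) - ∫ y in Ioc 0 t, y ∂μ := by
  rw [integral_congr_ae (posPart_sub_ae_eq hμ t), Pi.sub_def,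
    integral_sub ((integrable_const t).indicator measurableSet_Iic)
      (integrable_indicator_Ioc_id t),
    integral_indicator_const _ measurableSet_Iic, integral_indicator measurableSet_Ioc,
    smul_eq_mul, mul_comm]
  rfl

end Expectation

section Law

variable {Ω : Type*} [MeasurableSpace Ω] {P : Measure Ω}

lemma ae_map_nonneg {Y : Ω → ℝ} (hY : Measurable Y) (hY0 : ∀ ω, 0 ≤ Y ω) :
    ∀ᵐ y ∂P.map Y, 0 ≤ y :=
  (ae_map_iff hY.aemeasurable measurableSet_Ici).mpr (ae_of_all _ hY0)

variable [IsFiniteMeasure P]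

lemma integrable_posPart_sub_comp {Y : Ω → ℝ} (hY : Measurable Y) (hY0 : ∀ ω, 0 ≤ Y ω) (t : ℝ) :
    Integrable (fun ω => (t - Y ω)⁺) P :=
  (integrable_posPart_sub (ae_map_nonneg hY hY0) t).comp_measurable hY

lemma integral_posPart_sub_comp {Y : Ω → ℝ} (hY : Measurable Y) (hY0 : ∀ ω, 0 ≤ Y ω) (t : ℝ) :
    ∫ ω, (t - Y ω)⁺ ∂P = t * (P.map Y).real (Iic t) - ∫ y in Ioc 0 t, y ∂P.map Y := by
  rw [← integral_posPart_sub (ae_map_nonneg hY hY0) t,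
    integral_map hY.aemeasurable
      (by fun_prop : Measurable fun y : ℝ => (t - y)⁺).aestronglyMeasurable]

variable {ι : Type*} [Fintype ι] {X : ι → Ω → ℝ}

lemma integral_sum_posPart_sub (hX : ∀ i, Measurable (X i)) (hX0 : ∀ i ω, 0 ≤ X i ω)
    {μ : Measure ℝ} (hlaw : ∀ i, P.map (X i) = μ) (t : ℝ) :
    ∫ ω, ∑ i, (t - X i ω)⁺ ∂P =
      Fintype.card ι * (t * μ.real (Iic t) - ∫ y in Ioc 0 t, y ∂μ) := by
  rw [integral_finsetSum _ fun i _ => integrable_posPart_sub_comp (hX i) (hX0 i) t]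
  simp_rw [integral_posPart_sub_comp (hX _) (hX0 _), hlaw]
  rw [sum_const, card_univ, nsmul_eq_mul]

theorem integral_maxPackingCard_le [IsProbabilityMeasure P] (hX : ∀ i, Measurable (X i))
    (hX0 : ∀ i ω, 0 ≤ X i ω) {μ : Measure ℝ} (hlaw : ∀ i, P.map (X i) = μ) {x t : ℝ}
    (ht : 0 < t) (hBRS : Fintype.card ι * ∫ y in Ioc 0 t, y ∂μ = x) :
    ∫ ω, (maxPackingCard x fun i => X i ω : ℝ) ∂P ≤ Fintype.card ι * μ.real (Iic t) := by
  have hx : 0 ≤ x := hBRS ▸ mul_nonneg (Nat.cast_nonneg _)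
    (setIntegral_nonneg measurableSet_Ioc fun y hy => hy.1.le)
  have hslack : Integrable (fun ω => ∑ i, (t - X i ω)⁺) P :=
    integrable_finsetSum _ fun i _ => integrable_posPart_sub_comp (hX i) (hX0 i) t
  have key : t * ∫ ω, (maxPackingCard x fun i => X i ω : ℝ) ∂P ≤
      x + ∫ ω, ∑ i, (t - X i ω)⁺ ∂P :=
    calc t * ∫ ω, (maxPackingCard x fun i => X i ω : ℝ) ∂P
        = ∫ ω, t * (maxPackingCard x fun i => X i ω : ℝ) ∂P := (integral_const_mul _ _).symm
      _ ≤ ∫ ω, (x + ∑ i, (t - X i ω)⁺) ∂P :=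
        integral_mono ((integrable_maxPackingCard hX x).const_mul t)
          ((integrable_const x).add hslack) fun ω => mul_maxPackingCard_le hx t
      _ = x + ∫ ω, ∑ i, (t - X i ω)⁺ ∂P := by
        rw [integral_add (integrable_const x) hslack, integral_const, probReal_univ, one_smul]
  rw [integral_sum_posPart_sub hX hX0 hlaw] at key
  exact le_of_mul_le_mul_left (by linarith) ht

end Law

theorem brs_sequential_knapsack_general
    {Ω : Type*} [MeasureSpace Ω] [IsProbabilityMeasure (ℙ : Measure Ω)]
    (n : ℕ) (x t : ℝ) (ht : 0 < t)
    (X : Fin n → Ω → ℝ) (hXmeas : ∀ k, Measurable (X k))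
    (hXnonneg : ∀ k ω, 0 ≤ X k ω)
    (μ : Measure ℝ) (hlaw : ∀ k, Measure.map (X k) ℙ = μ)
    (F : ℝ → ℝ) (hF : ∀ y, F y = (μ (Iic y)).toReal)
    (hBRS : (n : ℝ) * ∫ y in Ioc (0:ℝ) t, y ∂μ = x)
    -- the online policy: `D i ω` is the decision to accept item `i`,
    -- measurable with respect to the observations up to time `i`
    (D : Fin n → Ω → Bool)
    (hfeas : ∀ ω, ∑ i ∈ Finset.univ.filter (fun i => D i ω = true), X i ω ≤ x)
    (Ntil : Ω → ℕ)
    (hNtil : ∀ ω, Ntil ω = (Finset.univ.filter (fun i => D i ω = true)).card)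
    (N : Ω → ℕ)
    (hN : ∀ ω, N ω = ((Finset.univ.powerset.filter
      (fun A : Finset (Fin n) => ∑ i ∈ A, X i ω ≤ x)).sup Finset.card)) :
    (∫ ω, (Ntil ω : ℝ)) ≤ (∫ ω, (N ω : ℝ)) ∧
    (∫ ω, (N ω : ℝ)) ≤ n * F t := by
  obtain rfl : N = fun ω => maxPackingCard x fun i => X i ω := funext hN
  obtain rfl := funext hNtil
  refine ⟨integral_mono_of_nonneg (ae_of_all _ fun ω => Nat.cast_nonneg _)
    (integrable_maxPackingCard hXmeas x) (ae_of_all _ fun ω => ?_), ?_⟩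
  · exact Nat.cast_le.mpr (card_le_maxPackingCard (hfeas ω))
  · rw [hF, ← measureReal_def]
    simpa using integral_maxPackingCard_le hXmeas hXnonneg hlaw ht (by simpa using hBRS)

/-- Sequential knapsack: for `n` i.i.d. observations with distribution `F`
and capacity `x`, the number `Ñ(n,x)` of items packed by any online
(non-anticipating) policy satisfies
`E[Ñ(n,x)] ≤ E[N(n,x)] ≤ n·F(t(n,x))`, where `t(n,x)` solves
`n·∫_0^t y dF(y) = x`. -/
theorem brs_sequential_knapsack
    {Ω : Type*} [MeasureSpace Ω] [IsProbabilityMeasure (ℙ : Measure Ω)]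
    (n : ℕ) (x t : ℝ) (hx : 0 < x) (ht : 0 < t)
    (X : Fin n → Ω → ℝ) (hXmeas : ∀ k, Measurable (X k))
    (hXnonneg : ∀ k ω, 0 ≤ X k ω)
    (hiid : iIndepFun X ℙ)
    (μ : Measure ℝ) (hlaw : ∀ k, Measure.map (X k) ℙ = μ)
    (F : ℝ → ℝ) (hF : ∀ y, F y = (μ (Iic y)).toReal)
    (hBRS : (n : ℝ) * ∫ y in Ioc (0:ℝ) t, y ∂μ = x)
    -- the online policy: `D i ω` is the decision to accept item `i`,
    -- measurable with respect to the observations up to time `i`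
    (D : Fin n → Ω → Bool)
    (hadapt : ∀ i : Fin n, @Measurable Ω Bool
      (MeasurableSpace.comap (fun ω => fun j : Fin n =>
        if j ≤ i then X j ω else 0) inferInstance) _ (D i))
    (hfeas : ∀ ω, ∑ i ∈ Finset.univ.filter (fun i => D i ω = true), X i ω ≤ x)
    (Ntil : Ω → ℕ)
    (hNtil : ∀ ω, Ntil ω = (Finset.univ.filter (fun i => D i ω = true)).card)
    (N : Ω → ℕ)
    (hN : ∀ ω, N ω = ((Finset.univ.powerset.filter
      (fun A : Finset (Fin n) => ∑ i ∈ A, X i ω ≤ x)).sup Finset.card)) :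
    (∫ ω, (Ntil ω : ℝ)) ≤ (∫ ω, (N ω : ℝ)) ∧
    (∫ ω, (N ω : ℝ)) ≤ n * F t :=
  brs_sequential_knapsack_general n x t ht X hXmeas hXnonneg μ hlaw F hF hBRS D hfeas Ntil hNtil N
    hN
end

section
/- For i.i.d. U[0,1] observations, the expected number Ṽ_n of selections made by the optimal online monotone (decreasing) subsequence selection policy satisfies E[Ṽ_n] ≤ √(2n) for all n ≥ 1. -/
/-!
Let `Gᵢ` be the value of the last item selected before time `i`, or `1` if there is none.
Selecting `Xᵢ` spends `Gᵢ - Xᵢ ≥ 0`, and these amounts telescope to `1 - Gₙ ≤ 1`.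
Given the past, `Xᵢ` is still uniform and is selected only on a set `B ⊆ [0, Gᵢ]`;
among such sets of measure `β` the expected spending `∫_B (Gᵢ - u) du` is smallest when `B`
is an interval ending at `Gᵢ`, where it equals `β² / 2` (bathtub principle). With Jensen's
inequality over the past this gives `∑ pᵢ² ≤ 2` for `pᵢ = P(Xᵢ is selected)`, and
Cauchy–Schwarz gives `E[V] = ∑ pᵢ ≤ √(n ∑ pᵢ²) ≤ √(2n)`.
-/

open MeasureTheory ProbabilityTheory Finset Set
open scoped Classical ENNReal

lemma sq_lintegral_le_lintegral_sq {α : Type*} [MeasurableSpace α] {μ : Measure α}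
    [IsProbabilityMeasure μ] {f : α → ℝ≥0∞} (hf : AEMeasurable f μ) :
    (∫⁻ x, f x ∂μ) ^ 2 ≤ ∫⁻ x, f x ^ 2 ∂μ := by
  have hölder := ENNReal.lintegral_mul_le_Lp_mul_Lq μ Real.HolderConjugate.two_two hf
    aemeasurable_const (g := 1)
  simp only [Pi.one_apply, mul_one, ENNReal.one_rpow, lintegral_const, measure_univ] at hölder
  calc (∫⁻ x, f x ∂μ) ^ 2 ≤ ((∫⁻ x, f x ^ (2 : ℝ) ∂μ) ^ (1 / 2 : ℝ)) ^ (2 : ℝ) := by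
        rw [ENNReal.rpow_two]; exact pow_le_pow_left' hölder 2
    _ = ∫⁻ x, f x ^ 2 ∂μ := by
        rw [← ENNReal.rpow_mul]; norm_num

lemma measure_univ_sq_div_two_le_lintegral_sub {ρ : Measure ℝ} [IsFiniteMeasure ρ]
    (hρ : ρ ≤ volume) {s : ℝ} (hs : ∀ᵐ u ∂ρ, u ≤ s) :
    ρ univ ^ 2 / 2 ≤ ∫⁻ u, ENNReal.ofReal (s - u) ∂ρ := by
  set β := ρ.real univ
  have hβ : ρ univ = ENNReal.ofReal β := (ofReal_measureReal (measure_ne_top _ _)).symm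
  have hβ_nonneg : 0 ≤ β := measureReal_nonneg
  have hlevel : ∀ t : ℝ, 0 < t → ENNReal.ofReal (β - t) ≤ ρ {u | t < s - u} := by
    intro t ht
    have hcompl : ρ {u | t < s - u}ᶜ ≤ ENNReal.ofReal t := calc
      ρ {u | t < s - u}ᶜ ≤ ρ (Icc (s - t) s) := by
        refine measure_mono_ae ?_
        filter_upwards [hs] with u hu hut
        exact ⟨by linarith [not_lt.1 (show ¬t < s - u from hut)], hu⟩
      _ ≤ volume (Icc (s - t) s) := hρ _
      _ = ENNReal.ofReal t := by simp
    rw [ENNReal.ofReal_sub _ ht.le, ← hβ, tsub_le_iff_right]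
    exact (measure_univ_le_add_compl _).trans (by gcongr)
  calc ρ univ ^ 2 / 2 = ENNReal.ofReal (∫ t in (0)..β, (β - t)) := by
        rw [intervalIntegral.integral_comp_sub_left (fun t => t), integral_id, hβ,
          ENNReal.ofReal_div_of_pos two_pos, sub_self, sub_zero, zero_pow two_ne_zero,
          sub_zero, ENNReal.ofReal_pow hβ_nonneg, ENNReal.ofReal_ofNat]
    _ = ∫⁻ t in Ioc 0 β, ENNReal.ofReal (β - t) := by
        rw [intervalIntegral.integral_of_le hβ_nonneg, ofReal_integral_eq_lintegral_ofReal]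
        · exact (continuous_const.sub continuous_id).integrableOn_Icc.mono_set Ioc_subset_Icc_self
        · filter_upwards [ae_restrict_mem measurableSet_Ioc] with t ht
          exact sub_nonneg.2 ht.2
    _ ≤ ∫⁻ t in Ioi 0, ρ {u | t < s - u} :=
        (lintegral_mono_set Set.Ioc_subset_Ioi_self).trans
          (setLIntegral_mono' measurableSet_Ioi hlevel)
    _ = ∫⁻ u, ENNReal.ofReal (s - u) ∂ρ :=
        (lintegral_eq_lintegral_meas_lt ρ (by filter_upwards [hs] with u hu; simpa using hu)
          (measurable_const.sub measurable_id).aemeasurable).symm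

lemma setLIntegral_prod_eq_lintegral_setLIntegral {α β : Type*} [MeasurableSpace α]
    [MeasurableSpace β] {μ : Measure α} {ν : Measure β} [SFinite ν] {C : Set (α × β)}
    (hC : MeasurableSet C) {f : α × β → ℝ≥0∞} (hf : Measurable f) :
    ∫⁻ p in C, f p ∂μ.prod ν = ∫⁻ x, ∫⁻ y in Prod.mk x ⁻¹' C, f (x, y) ∂ν ∂μ := by
  rw [← lintegral_indicator hC, lintegral_prod _ (hf.indicator hC).aemeasurable]
  congr! 2 with x
  rw [← lintegral_indicator (measurable_prodMk_left hC)]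
  rfl

lemma measure_sq_div_two_le_setLIntegral_of_indepFun {Ω E : Type*} [MeasurableSpace Ω]
    [MeasurableSpace E] {μ : Measure Ω} [IsProbabilityMeasure μ] {W : Ω → E} {U : Ω → ℝ}
    (hW : Measurable W) (hU : Measurable U) (hWU : IndepFun W U μ) (hUvol : μ.map U ≤ volume)
    {g : E → ℝ} (hg : Measurable g) {C : Set (E × ℝ)} (hC : MeasurableSet C)
    (hCg : ∀ᵐ ω ∂μ, (W ω, U ω) ∈ C → U ω ≤ g (W ω)) :
    μ ((fun ω => (W ω, U ω)) ⁻¹' C) ^ 2 / 2 ≤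
      ∫⁻ ω in (fun ω => (W ω, U ω)) ⁻¹' C, ENNReal.ofReal (g (W ω) - U ω) ∂μ := by
  set ν := μ.map U
  have : IsProbabilityMeasure (μ.map W) := Measure.isProbabilityMeasure_map hW.aemeasurable
  have hWU_meas : Measurable fun ω => (W ω, U ω) := hW.prodMk hU
  have hmap : μ.map (fun ω => (W ω, U ω)) = (μ.map W).prod ν :=
    (indepFun_iff_map_prod_eq_prod_map_map hW.aemeasurable hU.aemeasurable).1 hWU
  have hF : Measurable fun p : E × ℝ => ENNReal.ofReal (g p.1 - p.2) :=
    ((hg.comp measurable_fst).sub measurable_snd).ennreal_ofReal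
  have hsection : ∀ᵐ x ∂μ.map W, ∀ᵐ u ∂ν, (x, u) ∈ C → u ≤ g x := by
    refine Measure.ae_ae_of_ae_prod (μ := μ.map W) (ν := ν)
      (p := fun p => p ∈ C → p.2 ≤ g p.1) ?_
    rw [← hmap, ae_map_iff hWU_meas.aemeasurable]
    · exact hCg
    · exact hC.imp (measurableSet_le measurable_snd (hg.comp measurable_fst))
  calc μ ((fun ω => (W ω, U ω)) ⁻¹' C) ^ 2 / 2
      = (∫⁻ x, ν (Prod.mk x ⁻¹' C) ∂μ.map W) ^ 2 / 2 := by
        rw [← Measure.map_apply hWU_meas hC, hmap, Measure.prod_apply hC]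
    _ ≤ (∫⁻ x, ν (Prod.mk x ⁻¹' C) ^ 2 ∂μ.map W) / 2 := by
        gcongr
        exact sq_lintegral_le_lintegral_sq (measurable_measure_prodMk_left hC).aemeasurable
    _ = ∫⁻ x, ν (Prod.mk x ⁻¹' C) ^ 2 / 2 ∂μ.map W := by
        simp_rw [div_eq_mul_inv]
        exact (lintegral_mul_const' _ _ (by simp)).symm
    _ ≤ ∫⁻ x, ∫⁻ u in Prod.mk x ⁻¹' C, ENNReal.ofReal (g x - u) ∂ν ∂μ.map W := by
        refine lintegral_mono_ae ?_
        filter_upwards [hsection] with x hx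
        have hCx : MeasurableSet (Prod.mk x ⁻¹' C) := measurable_prodMk_left hC
        rw [← Measure.restrict_apply_univ]
        exact measure_univ_sq_div_two_le_lintegral_sub (Measure.restrict_le_self.trans hUvol)
          ((ae_restrict_iff' hCx).2 hx)
    _ = ∫⁻ ω in (fun ω => (W ω, U ω)) ⁻¹' C, ENNReal.ofReal (g (W ω) - U ω) ∂μ := by
        rw [← setLIntegral_prod_eq_lintegral_setLIntegral hC hF, ← hmap,
          setLIntegral_map hC hF hWU_meas]

lemma integral_card_filter_mem_eq_sum_measureReal {Ω ι : Type*} [MeasurableSpace Ω]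
    {μ : Measure Ω} [IsFiniteMeasure μ] [Fintype ι] {A : ι → Set Ω}
    (hA : ∀ i, MeasurableSet (A i)) :
    ∫ ω, (#{i | ω ∈ A i} : ℝ) ∂μ = ∑ i, μ.real (A i) := by
  have hcard : ∀ ω, (#{i | ω ∈ A i} : ℝ) = ∑ i, (A i).indicator 1 ω := fun ω => by
    rw [Finset.natCast_card_filter]
    simp only [indicator_apply, Pi.one_apply]
  simp_rw [hcard]
  rw [integral_finsetSum _ fun i _ => (integrable_const 1).indicator (hA i)]
  simp_rw [integral_indicator_one (hA _)]

section OnlineSelection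

variable {n : ℕ}

def observedUpTo (i : Fin n) (x : Fin n → ℝ) : Fin n → ℝ := fun j => if j ≤ i then x j else 0

def observedBefore (i : Fin n) (x : Fin n → ℝ) : Fin n → ℝ := fun j => if j < i then x j else 0

lemma measurable_observedUpTo (i : Fin n) : Measurable (observedUpTo i) :=
  measurable_pi_lambda _ fun j => by unfold observedUpTo; split_ifs <;> fun_prop

lemma measurable_observedBefore (i : Fin n) : Measurable (observedBefore i) :=
  measurable_pi_lambda _ fun j => by unfold observedBefore; split_ifs <;> fun_prop

lemma update_observedBefore (i : Fin n) (x : Fin n → ℝ) :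
    Function.update (observedBefore i x) i (x i) = observedUpTo i x := by
  ext j
  rcases lt_trichotomy j i with h | rfl | h
  · simp [observedBefore, observedUpTo, h, h.ne, h.le]
  · simp [observedUpTo]
  · simp [observedBefore, observedUpTo, h.ne', h.not_gt, h.not_ge]

lemma ProbabilityTheory.iIndepFun.indepFun_observedBefore {Ω : Type*} [MeasurableSpace Ω]
    {μ : Measure Ω} {X : Fin n → Ω → ℝ} (hind : iIndepFun X μ) (hX : ∀ i, Measurable (X i)) (i : Fin n) :
    IndepFun (fun ω => observedBefore i (X · ω)) (X i) μ := by
  have hpast := hind.indepFun_finset (Finset.Iio i) {i} (by simp) hX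
  have hφ : Measurable fun (v : Finset.Iio i → ℝ) j =>
      if h : j < i then v ⟨j, Finset.mem_Iio.2 h⟩ else 0 :=
    measurable_pi_lambda _ fun j => by split_ifs <;> fun_prop
  exact hpast.comp hφ (measurable_pi_apply ⟨i, Finset.mem_singleton_self i⟩)

-- A policy is encoded by the sets `S i`: item `i` is selected iff `observedUpTo i x ∈ S i`.
variable (S : Fin n → Set (Fin n → ℝ))

noncomputable def lastSelected : ℕ → (Fin n → ℝ) → ℝ
  | 0, _ => 1
  | k + 1, x =>
    if h : k < n then
      if observedUpTo ⟨k, h⟩ x ∈ S ⟨k, h⟩ then x ⟨k, h⟩ else lastSelected k x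
    else lastSelected k x

lemma lastSelected_succ (i : Fin n) (x : Fin n → ℝ) :
    lastSelected S (i + 1) x = if observedUpTo i x ∈ S i then x i else lastSelected S i x := by
  simp [lastSelected, i.isLt]

lemma lastSelected_congr {k : ℕ} {x y : Fin n → ℝ}
    (hxy : ∀ j : Fin n, (j : ℕ) < k → x j = y j) :
    lastSelected S k x = lastSelected S k y := by
  induction k with
  | zero => rfl
  | succ k ih =>
    have ih' := ih fun j hj => hxy j (by omega)
    by_cases hk : k < n
    · have hobs : observedUpTo ⟨k, hk⟩ x = observedUpTo ⟨k, hk⟩ y := by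
        ext j
        simp only [observedUpTo]
        split_ifs with hj
        · exact hxy j (Nat.lt_succ_of_le hj)
        · rfl
      simp [lastSelected, hk, hobs, ih', hxy ⟨k, hk⟩ (by simp)]
    · simp [lastSelected, hk, ih']

lemma lastSelected_observedBefore (i : Fin n) (x : Fin n → ℝ) :
    lastSelected S i (observedBefore i x) = lastSelected S i x :=
  lastSelected_congr S fun _ hj => if_pos hj

lemma measurable_lastSelected (hS : ∀ i, MeasurableSet (S i)) (k : ℕ) :
    Measurable (lastSelected S k) := by
  induction k with
  | zero => exact measurable_const
  | succ k ih =>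
    by_cases hk : k < n
    · simp only [lastSelected, hk, dite_true]
      exact Measurable.ite (measurable_observedUpTo _ (hS _)) (measurable_pi_apply _) ih
    · simpa [lastSelected, hk] using ih

lemma lastSelected_eq_one_or_exists (k : ℕ) (x : Fin n → ℝ) :
    lastSelected S k x = 1 ∨
      ∃ j : Fin n, (j : ℕ) < k ∧ observedUpTo j x ∈ S j ∧ lastSelected S k x = x j := by
  induction k with
  | zero => exact Or.inl rfl
  | succ k ih =>
    have ih' : lastSelected S k x = 1 ∨
        ∃ j : Fin n, (j : ℕ) < k + 1 ∧ observedUpTo j x ∈ S j ∧ lastSelected S k x = x j :=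
      ih.imp_right fun ⟨j, hjk, hj, hjx⟩ => ⟨j, by omega, hj, hjx⟩
    by_cases hk : k < n
    · by_cases hsel : observedUpTo ⟨k, hk⟩ x ∈ S ⟨k, hk⟩
      · exact Or.inr ⟨⟨k, hk⟩, by simp, hsel, by simp [lastSelected, hk, hsel]⟩
      · simpa [lastSelected, hk, hsel] using ih'
    · simpa [lastSelected, hk] using ih'

lemma sum_ite_lastSelected_sub (x : Fin n → ℝ) :
    ∑ i : Fin n, (if observedUpTo i x ∈ S i then lastSelected S i x - x i else 0) =
      1 - lastSelected S n x := by
  have hstep : ∀ i : Fin n, (if observedUpTo i x ∈ S i then lastSelected S i x - x i else 0) =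
      lastSelected S i x - lastSelected S (i + 1) x := by
    intro i
    rw [lastSelected_succ]
    split_ifs <;> ring
  simp_rw [hstep]
  rw [Fin.sum_univ_eq_sum_range (fun k => lastSelected S k x - lastSelected S (k + 1) x),
    Finset.sum_range_sub']
  rfl

def IsDecreasingSelection (x : Fin n → ℝ) : Prop :=
  ∀ i j : Fin n, i < j → observedUpTo i x ∈ S i → observedUpTo j x ∈ S j → x j < x i

variable {S}

lemma IsDecreasingSelection.le_lastSelected {x : Fin n → ℝ} (hdec : IsDecreasingSelection S x)
    (hx : ∀ j, x j ≤ 1) {i : Fin n} (hi : observedUpTo i x ∈ S i) :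
    x i ≤ lastSelected S i x := by
  rcases lastSelected_eq_one_or_exists S i x with h | ⟨j, hji, hj, h⟩
  · exact h ▸ hx i
  · exact h ▸ (hdec j i hji hj hi).le

lemma lastSelected_nonneg {x : Fin n → ℝ} (hx : ∀ j, 0 ≤ x j) (k : ℕ) :
    0 ≤ lastSelected S k x := by
  rcases lastSelected_eq_one_or_exists S k x with h | ⟨j, -, -, h⟩
  · exact h ▸ zero_le_one
  · exact h ▸ hx j

lemma IsDecreasingSelection.sum_ofReal_lastSelected_sub_le_one {x : Fin n → ℝ}
    (hdec : IsDecreasingSelection S x) (hx : ∀ j, x j ∈ Icc (0 : ℝ) 1) :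
    ∑ i : Fin n, (if observedUpTo i x ∈ S i then ENNReal.ofReal (lastSelected S i x - x i)
      else 0) ≤ 1 := by
  have hterm : ∀ i : Fin n,
      0 ≤ if observedUpTo i x ∈ S i then lastSelected S i x - x i else 0 := by
    intro i
    split_ifs with hi
    · exact sub_nonneg.2 (hdec.le_lastSelected (fun j => (hx j).2) hi)
    · exact le_rfl
  calc ∑ i : Fin n, (if observedUpTo i x ∈ S i then ENNReal.ofReal (lastSelected S i x - x i)
        else 0)
      = ENNReal.ofReal (1 - lastSelected S n x) := by
        rw [← sum_ite_lastSelected_sub, ENNReal.ofReal_sum_of_nonneg fun i _ => hterm i]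
        congr! 1 with i
        split_ifs <;> simp
    _ ≤ 1 :=
        ENNReal.ofReal_le_one.2 (by linarith [lastSelected_nonneg (S := S) (fun j => (hx j).1) n])

variable {Ω : Type*} [MeasurableSpace Ω] {μ : Measure Ω} [IsProbabilityMeasure μ]
  {X : Fin n → Ω → ℝ}

lemma measure_selected_sq_div_two_le (hX : ∀ i, Measurable (X i)) (hind : iIndepFun X μ)
    (hvol : ∀ i, μ.map (X i) ≤ volume) (hS : ∀ i, MeasurableSet (S i))
    (hX01 : ∀ᵐ ω ∂μ, ∀ j, X j ω ∈ Icc (0 : ℝ) 1)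
    (hdec : ∀ᵐ ω ∂μ, IsDecreasingSelection S (X · ω)) (i : Fin n) :
    μ {ω | observedUpTo i (X · ω) ∈ S i} ^ 2 / 2 ≤
      ∫⁻ ω in {ω | observedUpTo i (X · ω) ∈ S i},
        ENNReal.ofReal (lastSelected S i (X · ω) - X i ω) ∂μ := by
  -- Splits the decision at time `i` into the past, independent of `X i`, and `X i` itself.
  set C : Set ((Fin n → ℝ) × ℝ) := {p | Function.update p.1 i p.2 ∈ S i}
  have hpre : (fun ω => (observedBefore i (X · ω), X i ω)) ⁻¹' C =
      {ω | observedUpTo i (X · ω) ∈ S i} := by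
    ext ω
    simp [C, update_observedBefore]
  have hpast : Measurable fun ω => observedBefore i (X · ω) :=
    (measurable_observedBefore i).comp (measurable_pi_lambda _ hX)
  have hCg : ∀ᵐ ω ∂μ, (observedBefore i (X · ω), X i ω) ∈ C →
      X i ω ≤ lastSelected S i (observedBefore i (X · ω)) := by
    filter_upwards [hX01, hdec] with ω h01 hω hmem
    rw [lastSelected_observedBefore]
    exact hω.le_lastSelected (fun j => (h01 j).2) (by simpa [C, update_observedBefore] using hmem)
  have key := measure_sq_div_two_le_setLIntegral_of_indepFun hpast (hX i)
    (hind.indepFun_observedBefore hX i) (hvol i) (measurable_lastSelected S hS i)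
    (C := C) (measurable_update' (hS i)) hCg
  rw [hpre] at key
  simpa only [lastSelected_observedBefore] using key

lemma sum_setLIntegral_lastSelected_sub_le_one (hX : ∀ i, Measurable (X i))
    (hS : ∀ i, MeasurableSet (S i)) (hX01 : ∀ᵐ ω ∂μ, ∀ j, X j ω ∈ Icc (0 : ℝ) 1)
    (hdec : ∀ᵐ ω ∂μ, IsDecreasingSelection S (X · ω)) :
    ∑ i, ∫⁻ ω in {ω | observedUpTo i (X · ω) ∈ S i},
      ENNReal.ofReal (lastSelected S i (X · ω) - X i ω) ∂μ ≤ 1 := by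
  have hXvec : Measurable fun ω => (X · ω) := measurable_pi_lambda _ hX
  have hA : ∀ i, MeasurableSet {ω | observedUpTo i (X · ω) ∈ S i} := fun i =>
    (measurable_observedUpTo i).comp hXvec (hS i)
  have hF : ∀ i : Fin n,
      Measurable fun ω => ENNReal.ofReal (lastSelected S i (X · ω) - X i ω) := fun i => (((measurable_lastSelected S hS i).comp hXvec).sub (hX i)).ennreal_ofReal
  simp_rw [← lintegral_indicator (hA _)]
  rw [← lintegral_finsetSum _ fun i _ => (hF i).indicator (hA i)]
  calc ∫⁻ ω, ∑ i, {ω | observedUpTo i (X · ω) ∈ S i}.indicator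
        (fun ω => ENNReal.ofReal (lastSelected S i (X · ω) - X i ω)) ω ∂μ
      ≤ ∫⁻ _, 1 ∂μ := by
        refine lintegral_mono_ae ?_
        filter_upwards [hX01, hdec] with ω h01 hω
        simpa [indicator_apply] using hω.sum_ofReal_lastSelected_sub_le_one h01
    _ = 1 := by simp

theorem sum_sq_measureReal_selected_le_two (hX : ∀ i, Measurable (X i)) (hind : iIndepFun X μ)
    (hvol : ∀ i, μ.map (X i) ≤ volume) (hS : ∀ i, MeasurableSet (S i))
    (hX01 : ∀ᵐ ω ∂μ, ∀ j, X j ω ∈ Icc (0 : ℝ) 1)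
    (hdec : ∀ᵐ ω ∂μ, IsDecreasingSelection S (X · ω)) :
    ∑ i, μ.real {ω | observedUpTo i (X · ω) ∈ S i} ^ 2 ≤ 2 := by
  have h := (Finset.sum_le_sum fun i _ =>
    measure_selected_sq_div_two_le hX hind hvol hS hX01 hdec i).trans
    (sum_setLIntegral_lastSelected_sub_le_one hX hS hX01 hdec)
  have h' := ENNReal.toReal_mono ENNReal.one_ne_top h
  rw [ENNReal.toReal_sum fun i _ => by simp [ENNReal.div_eq_top]] at h'
  simp only [ENNReal.toReal_div, ENNReal.toReal_pow, ENNReal.toReal_ofNat, ENNReal.toReal_one,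
    ← measureReal_def, ← Finset.sum_div] at h'
  linarith

end OnlineSelection

theorem online_monotone_subsequence_bound_general
    {Ω : Type*} [MeasureSpace Ω] [IsProbabilityMeasure (ℙ : Measure Ω)]
    (n : ℕ)
    (X : Fin n → Ω → ℝ) (hXmeas : ∀ k, Measurable (X k))
    (hiid : iIndepFun X ℙ)
    (hlaw : ∀ k, Measure.map (X k) ℙ = volume.restrict (Icc (0:ℝ) 1))
    -- the online selection policy: `D i ω` is the decision to select `X i`,
    -- measurable with respect to the observations up to time `i`
    (D : Fin n → Ω → Bool)
    (hadapt : ∀ i : Fin n, @Measurable Ω Bool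
      (MeasurableSpace.comap (fun ω => fun j : Fin n =>
        if j ≤ i then X j ω else 0) inferInstance) _ (D i))
    (hmono : ∀ ω, ∀ i j : Fin n, i < j →
      D i ω = true → D j ω = true → X j ω < X i ω)
    (V : Ω → ℕ)
    (hV : ∀ ω, V ω = (Finset.univ.filter (fun i => D i ω = true)).card) :
    ∫ ω, (V ω : ℝ) ≤ Real.sqrt (2 * n) := by
  choose S hS hSD using fun i => MeasurableSpace.measurableSet_comap.1
    (hadapt i (measurableSet_singleton true))
  have hD : ∀ i ω, D i ω = true ↔ observedUpTo i (X · ω) ∈ S i := fun i ω =>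
    (Set.ext_iff.1 (hSD i) ω).symm
  have hX01 : ∀ᵐ ω, ∀ j, X j ω ∈ Icc (0 : ℝ) 1 := ae_all_iff.2 fun j =>
    ae_of_ae_map (hXmeas j).aemeasurable (hlaw j ▸ ae_restrict_mem measurableSet_Icc)
  have hdec : ∀ᵐ ω, IsDecreasingSelection S (X · ω) := ae_of_all _ fun ω i j hij hi hj =>
    hmono ω i j hij ((hD i ω).2 hi) ((hD j ω).2 hj)
  set p : Fin n → ℝ := fun i => (ℙ : Measure Ω).real {ω | observedUpTo i (X · ω) ∈ S i}
  have hsq : ∑ i, p i ^ 2 ≤ 2 := sum_sq_measureReal_selected_le_two hXmeas hiid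
    (fun i => (hlaw i).trans_le Measure.restrict_le_self) hS hX01 hdec
  have hEV : ∫ ω, (V ω : ℝ) = ∑ i, p i := by
    simp_rw [hV, hD]
    exact integral_card_filter_mem_eq_sum_measureReal fun i =>
      (measurable_observedUpTo i).comp (measurable_pi_lambda _ hXmeas) (hS i)
  rw [hEV]
  refine Real.le_sqrt_of_sq_le ?_
  calc (∑ i, p i) ^ 2 ≤ n * ∑ i, p i ^ 2 := by
        simpa using sq_sum_le_card_mul_sum_sq (s := univ) (f := p)
    _ ≤ 2 * n := by nlinarith

/-- Online monotone subsequence selection: for i.i.d. `U[0,1]` observations,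
the expected number of selections made by any (in particular the optimal)
online policy selecting a strictly decreasing subsequence satisfies
`E[Ṽ_n] ≤ √(2n)` for all `n ≥ 1`. -/
theorem online_monotone_subsequence_bound
    {Ω : Type*} [MeasureSpace Ω] [IsProbabilityMeasure (ℙ : Measure Ω)]
    (n : ℕ) (hn : 1 ≤ n)
    (X : Fin n → Ω → ℝ) (hXmeas : ∀ k, Measurable (X k))
    (hiid : iIndepFun X ℙ)
    (hlaw : ∀ k, Measure.map (X k) ℙ = volume.restrict (Icc (0:ℝ) 1))
    -- the online selection policy: `D i ω` is the decision to select `X i`,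
    -- measurable with respect to the observations up to time `i`
    (D : Fin n → Ω → Bool)
    (hadapt : ∀ i : Fin n, @Measurable Ω Bool
      (MeasurableSpace.comap (fun ω => fun j : Fin n =>
        if j ≤ i then X j ω else 0) inferInstance) _ (D i))
    (hmono : ∀ ω, ∀ i j : Fin n, i < j →
      D i ω = true → D j ω = true → X j ω < X i ω)
    (V : Ω → ℕ)
    (hV : ∀ ω, V ω = (Finset.univ.filter (fun i => D i ω = true)).card) :
    ∫ ω, (V ω : ℝ) ≤ Real.sqrt (2 * n) :=
  online_monotone_subsequence_bound_general n X hXmeas hiid hlaw D hadapt hmono V hV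
end

section
/- Let X_1, X_2, ... be i.i.d. U[0,1] random variables and let A_n be the event that X_{n+1} becomes a direct neighbour of X_n (i.e., the open interval between X_n and X_{n+1} contains none of X_1,...,X_{n−1}). Then P(A_n infinitely often) = 1. -/
/-!
Fix the values `X 1, …, X (n-1)` and rank a point by the number of them lying below it. There
are at most `n` ranks, and no `X j` lies strictly between two points of equal rank. By
Cauchy–Schwarz, two independent draws from any law have equal rank with probability at least
`1/n`, so whatever happened before time `n`, `A n` fails with probability at most `1 - 1/n`.
Along the indices `N + 1, N + 3, N + 5, …` the earlier failures are determined by the variables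
preceding the next pair, so the probability that all of them fail up to stage `K` is at most
`∏ (1 - 1/(N + 1 + 2k)) ≤ exp (-∑ 1/(N + 1 + 2k))`, which tends to `0`.
-/

open MeasureTheory ProbabilityTheory Set Filter
open scoped Classical ENNReal NNReal Topology Finset

theorem inv_card_le_measure_prod_setOf_eq {α β : Type*} [MeasurableSpace α] [MeasurableSpace β]
    [MeasurableSingletonClass β] (ν : Measure α) [IsProbabilityMeasure ν] {f : α → β}
    (hf : Measurable f) (t : Finset β) (hft : ∀ a, f a ∈ t) :
    (#t : ℝ≥0∞)⁻¹ ≤ (ν.prod ν) {p | f p.1 = f p.2} := by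
  have hfib : ∀ b, MeasurableSet (f ⁻¹' {b}) := fun b => hf (measurableSet_singleton b)
  have hdiag : {p : α × α | f p.1 = f p.2} = ⋃ b ∈ t, (f ⁻¹' {b}) ×ˢ (f ⁻¹' {b}) := by
    ext p
    simp [hft, eq_comm]
  have hdisj : PairwiseDisjoint (t : Set β) fun b => (f ⁻¹' {b}) ×ˢ (f ⁻¹' {b}) :=
    fun b _ c _ hbc => (disjoint_singleton.2 hbc).preimage f |>.set_prod_left _ _
  rw [hdiag, measure_biUnion_finset hdisj fun b _ => (hfib b).prod (hfib b)]
  simp_rw [Measure.prod_prod]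
  have hsum : ∑ b ∈ t, ν (f ⁻¹' {b}) = 1 := by
    rw [sum_measure_preimage_singleton t fun b _ => hfib b,
      show f ⁻¹' t = univ from eq_univ_of_forall hft, measure_univ]
  set a : β → ℝ≥0 := fun b => (ν (f ⁻¹' {b})).toNNReal
  have ha : ∀ b, ν (f ⁻¹' {b}) = a b := fun b => (ENNReal.coe_toNNReal (measure_ne_top _ _)).symm
  simp only [ha] at hsum ⊢
  have hcs : 1 ≤ (#t : ℝ≥0) * ∑ b ∈ t, a b * a b := by
    simpa [sq, show ∑ b ∈ t, a b = 1 by exact_mod_cast hsum]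
      using sq_sum_le_card_mul_sum_sq (s := t) (f := a)
  have ht : (#t : ℝ≥0) ≠ 0 := by rintro h; simp [h] at hcs
  rw [← ENNReal.coe_natCast, ← ENNReal.coe_inv ht]
  exact_mod_cast (inv_le_iff_one_le_mul₀' (pos_iff_ne_zero.2 ht)).2 hcs

theorem measure_prod_exists_mem_Ioo_le {α : Type*} [LinearOrder α] [TopologicalSpace α]
    [OrderClosedTopology α] [MeasurableSpace α] [BorelSpace α] (ν : Measure α)
    [IsProbabilityMeasure ν] (s : Finset α) :
    (ν.prod ν) {p | ∃ y ∈ s, y ∈ Ioo (min p.1 p.2) (max p.1 p.2)} ≤ 1 - (#s + 1 : ℝ≥0∞)⁻¹ := by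
  set rank : α → ℕ := fun a => #{y ∈ s | y < a}
  have hmono : Monotone rank := fun a b hab =>
    Finset.card_le_card <| Finset.monotone_filter_right _ fun y _ hy => hy.trans_le hab
  have hstrict : ∀ a b, ∀ y ∈ s, y ∈ Ioo a b → rank a < rank b := by
    rintro a b y hy ⟨hay, hyb⟩
    refine Finset.card_lt_card <| (Finset.ssubset_iff_of_subset
      (Finset.monotone_filter_right _ fun z _ hz => hz.trans (hay.trans hyb))).2 ⟨y, ?_, ?_⟩
    · simp [hy, hyb]
    · simp [hay.le]
  have hsep : {p : α × α | ∃ y ∈ s, y ∈ Ioo (min p.1 p.2) (max p.1 p.2)} ⊆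
      {p | rank p.1 = rank p.2}ᶜ := by
    rintro p ⟨y, hy, hmem⟩ heq
    have := hstrict _ _ y hy hmem
    rcases le_total p.1 p.2 with h | h <;> simp_all
  have hrank : Measurable rank := hmono.measurable
  calc _ ≤ (ν.prod ν) {p | rank p.1 = rank p.2}ᶜ := measure_mono hsep
    _ = 1 - (ν.prod ν) {p | rank p.1 = rank p.2} :=
      prob_compl_eq_one_sub (measurableSet_eq_fun (hrank.comp measurable_fst)
        (hrank.comp measurable_snd))
    _ ≤ 1 - (#s + 1 : ℝ≥0∞)⁻¹ := by
      gcongr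
      simpa using inv_card_le_measure_prod_setOf_eq ν hrank (Finset.range (#s + 1))
        fun a => Finset.mem_range_succ_iff.2 (Finset.card_filter_le _ _)

theorem ProbabilityTheory.IndepFun.measure_inter_preimage_le {Ω α β : Type*} [MeasurableSpace Ω]
    [MeasurableSpace α] [MeasurableSpace β] {μ : Measure Ω} [IsFiniteMeasure μ]
    {Y : Ω → α} {Z : Ω → β} (hY : Measurable Y) (hZ : Measurable Z) (hYZ : IndepFun Y Z μ)
    {E : Set α} (hE : MeasurableSet E) {S : Set (α × β)} (hS : MeasurableSet S) {c : ℝ≥0∞}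
    (hc : ∀ y, μ.map Z (Prod.mk y ⁻¹' S) ≤ c) :
    μ (Y ⁻¹' E ∩ (fun ω => (Y ω, Z ω)) ⁻¹' S) ≤ c * μ (Y ⁻¹' E) := by
  have hmap : μ.map (fun ω => (Y ω, Z ω)) = (μ.map Y).prod (μ.map Z) :=
    (indepFun_iff_map_prod_eq_prod_map_map hY.aemeasurable hZ.aemeasurable).1 hYZ
  have hES : MeasurableSet (E ×ˢ univ ∩ S) := (hE.prod .univ).inter hS
  calc μ (Y ⁻¹' E ∩ (fun ω => (Y ω, Z ω)) ⁻¹' S)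
      = μ.map (fun ω => (Y ω, Z ω)) (E ×ˢ univ ∩ S) := by
        rw [Measure.map_apply (hY.prodMk hZ) hES]; congr 1; ext; simp [and_comm]
    _ = ∫⁻ y, μ.map Z (Prod.mk y ⁻¹' (E ×ˢ univ ∩ S)) ∂μ.map Y := by
        rw [hmap, Measure.prod_apply hES]
    _ ≤ ∫⁻ y, E.indicator (fun _ => c) y ∂μ.map Y := lintegral_mono fun y => by
        by_cases hy : y ∈ E
        · simpa [hy] using hc y
        · simp [hy]
    _ = c * μ (Y ⁻¹' E) := by rw [lintegral_indicator_const hE, Measure.map_apply hY hE]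

theorem tendsto_zero_of_le_one_sub_mul {a p : ℕ → ℝ} (ha : ∀ K, 0 ≤ a K)
    (hstep : ∀ K, a (K + 1) ≤ (1 - p K) * a K)
    (hp : Tendsto (fun K => ∑ k ∈ Finset.range K, p k) atTop atTop) :
    Tendsto a atTop (𝓝 0) := by
  have hbound : ∀ K, a K ≤ a 0 * Real.exp (-∑ k ∈ Finset.range K, p k) := by
    intro K
    induction K with
    | zero => simp
    | succ K ih =>
      calc a (K + 1) ≤ (1 - p K) * a K := hstep K
        _ ≤ Real.exp (-p K) * (a 0 * Real.exp (-∑ k ∈ Finset.range K, p k)) :=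
          mul_le_mul (Real.one_sub_le_exp_neg _) ih (ha K) (Real.exp_pos _).le
        _ = a 0 * Real.exp (-∑ k ∈ Finset.range (K + 1), p k) := by
          rw [Finset.sum_range_succ, neg_add, Real.exp_add]; ring
  have hlim : Tendsto (fun K => a 0 * Real.exp (-∑ k ∈ Finset.range K, p k)) atTop (𝓝 0) := by
    simpa using (Real.tendsto_exp_atBot.comp (tendsto_neg_atTop_atBot.comp hp)).const_mul (a 0)
  exact tendsto_of_tendsto_of_tendsto_of_le_of_le tendsto_const_nhds hlim ha hbound

theorem tendsto_sum_range_inv_add_mul_atTop {a b : ℝ} (ha : 0 ≤ a) (hb : 0 < b) :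
    Tendsto (fun K => ∑ k ∈ Finset.range K, (a + b * k)⁻¹) atTop atTop := by
  rw [← not_summable_iff_tendsto_nat_atTop_of_nonneg fun k => by positivity]
  have harmonic : ¬Summable fun k : ℕ => 1 / |(k : ℝ) + a / b| ^ (1 : ℝ) := by
    rw [Real.summable_one_div_nat_add_rpow]; exact lt_irrefl 1
  refine fun h => harmonic ((h.mul_left b).congr fun k => ?_)
  rw [Real.rpow_one, abs_of_nonneg (by positivity)]
  field_simp
  ring

section Neighbours

variable {Ω : Type*} {X : ℕ → Ω → ℝ}

def initSegment (X : ℕ → Ω → ℝ) (n : ℕ) (ω : Ω) (j : Fin n) : ℝ := X j ω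

-- Index `0` is skipped because the sequence of the statement starts at `X 1`.
def separatedPairs (n : ℕ) : Set ((Fin n → ℝ) × ℝ × ℝ) :=
  {q | ∃ j : Fin n, 1 ≤ (j : ℕ) ∧ q.1 j ∈ Ioo (min q.2.1 q.2.2) (max q.2.1 q.2.2)}

def separatedAt (X : ℕ → Ω → ℝ) (n : ℕ) : Set Ω :=
  (fun ω => (initSegment X n ω, X n ω, X (n + 1) ω)) ⁻¹' separatedPairs n

theorem measurable_initSegment [MeasurableSpace Ω] (hX : ∀ n, Measurable (X n)) (n : ℕ) :
    Measurable (initSegment X n) :=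
  measurable_pi_lambda _ fun j => hX j

theorem measurableSet_separatedPairs (n : ℕ) : MeasurableSet (separatedPairs n) := by
  have : separatedPairs n = ⋃ j : Fin n, ⋃ (_ : 1 ≤ (j : ℕ)),
      {q | min q.2.1 q.2.2 < q.1 j} ∩ {q | q.1 j < max q.2.1 q.2.2} := by
    ext q
    simp only [separatedPairs, mem_ofPred_eq, mem_Ioo, mem_iUnion, mem_inter_iff, exists_prop]
  rw [this]
  have hmin : Measurable fun q : (Fin n → ℝ) × ℝ × ℝ => min q.2.1 q.2.2 := by fun_prop
  have hmax : Measurable fun q : (Fin n → ℝ) × ℝ × ℝ => max q.2.1 q.2.2 := by fun_prop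
  exact .iUnion fun j => .iUnion fun _ =>
    (measurableSet_lt hmin measurable_fst.eval).inter (measurableSet_lt measurable_fst.eval hmax)

theorem measure_prod_slice_separatedPairs_le (ν : Measure ℝ) [IsProbabilityMeasure ν] {n : ℕ}
    (hn : 1 ≤ n) (y : Fin n → ℝ) :
    (ν.prod ν) (Prod.mk y ⁻¹' separatedPairs n) ≤ 1 - (n : ℝ≥0∞)⁻¹ := by
  set s := Finset.image y {j | 1 ≤ (j : ℕ)}
  have hs : #s + 1 ≤ n := by
    have : #({j | 1 ≤ (j : ℕ)} : Finset (Fin n)) < n := by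
      simpa using Finset.card_lt_card (Finset.filter_ssubset (s := .univ)
        (p := fun j : Fin n => 1 ≤ (j : ℕ)) |>.2 ⟨⟨0, hn⟩, Finset.mem_univ _, by simp⟩)
    exact Finset.card_image_le.trans_lt this
  calc (ν.prod ν) (Prod.mk y ⁻¹' separatedPairs n)
      = (ν.prod ν) {p | ∃ z ∈ s, z ∈ Ioo (min p.1 p.2) (max p.1 p.2)} := by
        congr 1; ext p; simp [separatedPairs, s]
    _ ≤ 1 - (#s + 1 : ℝ≥0∞)⁻¹ := measure_prod_exists_mem_Ioo_le ν s
    _ ≤ 1 - (n : ℝ≥0∞)⁻¹ := by gcongr; exact_mod_cast hs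

theorem measurableSet_comap_initSegment_separatedAt {m n : ℕ} (hmn : m + 2 ≤ n) :
    MeasurableSet[MeasurableSpace.pi.comap (initSegment X n)] (separatedAt X m) := by
  set restrict : (Fin n → ℝ) → (Fin m → ℝ) × ℝ × ℝ :=
    fun y => (fun j => y (Fin.castLE (by omega) j), y ⟨m, by omega⟩, y ⟨m + 1, by omega⟩)
  have hrestrict : Measurable restrict := by fun_prop
  exact ⟨restrict ⁻¹' separatedPairs m, hrestrict (measurableSet_separatedPairs m), rfl⟩

theorem ProbabilityTheory.iIndepFun.indepFun_initSegment_pair [MeasurableSpace Ω] {μ : Measure Ω}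
    (hX : ∀ n, Measurable (X n)) (hiid : iIndepFun X μ) (n : ℕ) :
    IndepFun (initSegment X n) (fun ω => (X n ω, X (n + 1) ω)) μ := by
  have hdisj : Disjoint (Finset.range n) {n, n + 1} := by simp
  exact (hiid.indepFun_finset _ _ hdisj hX).comp
    (φ := fun h (j : Fin n) => h ⟨j, Finset.mem_range.2 j.2⟩)
    (ψ := fun h : ({n, n + 1} : Finset ℕ) → ℝ => (h ⟨n, by simp⟩, h ⟨n + 1, by simp⟩))
    (by fun_prop) (by fun_prop)

theorem measureReal_inter_separatedAt_le [MeasurableSpace Ω] {μ : Measure Ω}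
    [IsProbabilityMeasure μ] (hX : ∀ n, Measurable (X n)) (hiid : iIndepFun X μ) {n : ℕ}
    (hident : μ.map (X n) = μ.map (X (n + 1))) (hn : 1 ≤ n) {G : Set Ω}
    (hG : MeasurableSet[MeasurableSpace.pi.comap (initSegment X n)] G) :
    μ.real (G ∩ separatedAt X n) ≤ (1 - (n : ℝ)⁻¹) * μ.real G := by
  obtain ⟨E, hE, rfl⟩ := hG
  have : IsProbabilityMeasure (μ.map (X n)) := Measure.isProbabilityMeasure_map (hX n).aemeasurable
  have hpair : μ.map (fun ω => (X n ω, X (n + 1) ω)) = (μ.map (X n)).prod (μ.map (X n)) := by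
    rw [(indepFun_iff_map_prod_eq_prod_map_map (hX n).aemeasurable (hX (n + 1)).aemeasurable).1
      (hiid.indepFun (by omega)), hident]
  have h := (hiid.indepFun_initSegment_pair hX n).measure_inter_preimage_le
    (measurable_initSegment hX n) ((hX n).prodMk (hX (n + 1))) hE (measurableSet_separatedPairs n)
    fun y => hpair ▸ measure_prod_slice_separatedPairs_le _ hn y
  have hc : (1 - (n : ℝ≥0∞)⁻¹).toReal = 1 - (n : ℝ)⁻¹ := by
    rw [ENNReal.toReal_sub_of_le (ENNReal.inv_le_one.2 (by exact_mod_cast hn)) ENNReal.one_ne_top]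
    simp
  simpa [measureReal_def, separatedAt, hc] using ENNReal.toReal_mono (by finiteness) h

theorem measure_iInter_separatedAt_eq_zero [MeasurableSpace Ω] {μ : Measure Ω}
    [IsProbabilityMeasure μ] (hX : ∀ n, Measurable (X n)) (hiid : iIndepFun X μ)
    (hident : ∀ n, μ.map (X n) = μ.map (X (n + 1))) (N : ℕ) :
    μ (⋂ k, separatedAt X (N + 1 + 2 * k)) = 0 := by
  set G : ℕ → Set Ω := fun K => ⋂ k < K, separatedAt X (N + 1 + 2 * k)
  have hstep : ∀ K, μ.real (G (K + 1)) ≤ (1 - ((N + 1 : ℝ) + 2 * K)⁻¹) * μ.real (G K) := by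
    intro K
    have hG : MeasurableSet[MeasurableSpace.pi.comap (initSegment X (N + 1 + 2 * K))] (G K) :=
      .iInter fun k => .iInter fun hk => measurableSet_comap_initSegment_separatedAt (by omega)
    simpa [G, biInter_lt_succ] using
      measureReal_inter_separatedAt_le hX hiid (hident _) (by omega) hG
  have hlim : Tendsto (fun K => μ.real (G K)) atTop (𝓝 0) :=
    tendsto_zero_of_le_one_sub_mul (fun K => measureReal_nonneg) hstep
      (tendsto_sum_range_inv_add_mul_atTop (by positivity) two_pos)
  have hle : ∀ K, μ.real (⋂ k, separatedAt X (N + 1 + 2 * k)) ≤ μ.real (G K) := fun K =>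
    measureReal_mono (subset_iInter₂ fun k _ => iInter_subset _ k)
  exact (measureReal_eq_zero_iff).1 (le_antisymm (ge_of_tendsto' hlim hle) measureReal_nonneg)

end Neighbours

/-- Direct neighbours: for i.i.d. `U[0,1]` random variables `X 1, X 2, …`,
let `A n` be the event that `X (n+1)` becomes a direct neighbour of `X n`,
i.e. the open interval between `X n` and `X (n+1)` contains none of
`X 1, …, X (n−1)`. Then `P(A n infinitely often) = 1`. -/
theorem neighbours_infinitely_often
    {Ω : Type*} [MeasureSpace Ω] [IsProbabilityMeasure (ℙ : Measure Ω)]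
    (X : ℕ → Ω → ℝ) (hXmeas : ∀ n, Measurable (X n))
    (hiid : iIndepFun X ℙ)
    (hlaw : ∀ n, Measure.map (X n) ℙ = volume.restrict (Icc (0:ℝ) 1))
    (A : ℕ → Set Ω)
    (hA : ∀ n, A n = {ω | ∀ j, 1 ≤ j → j ≤ n - 1 →
      X j ω ∉ Ioo (min (X n ω) (X (n+1) ω)) (max (X n ω) (X (n+1) ω))}) :
    ℙ (Filter.limsup A Filter.atTop) = 1 := by
  have hsep : ∀ n, (A n)ᶜ = separatedAt X n := by
    intro n
    ext ω
    simp only [hA, separatedAt, separatedPairs, initSegment, mem_compl_iff, mem_ofPred_eq,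
      mem_preimage, not_forall, not_not, exists_prop]
    constructor
    · rintro ⟨j, hj, hjn, hmem⟩
      exact ⟨⟨j, by omega⟩, hj, hmem⟩
    · rintro ⟨j, hj, hmem⟩
      exact ⟨j, hj, by omega, hmem⟩
  have hident : ∀ n, Measure.map (X n) ℙ = Measure.map (X (n + 1)) ℙ := fun n => by rw [hlaw, hlaw]
  have hnull : ℙ (limsup A atTop)ᶜ = 0 := by
    refine measure_mono_null ?_ (measure_iUnion_null fun N =>
      measure_iInter_separatedAt_eq_zero hXmeas hiid hident N)
    intro ω hω
    rw [mem_compl_iff, mem_limsup_iff_frequently_mem, not_frequently, eventually_atTop] at hω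
    obtain ⟨N, hN⟩ := hω
    exact mem_iUnion.2 ⟨N, mem_iInter.2 fun k => hsep _ ▸ hN _ (by omega)⟩
  rw [measure_congr (ae_eq_univ.2 hnull), measure_univ]
end
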